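/- arXiv:1511.09259 — 10 statements merged into one kernel-verified Lean document; each statement's English description precedes it below -/
import Mathlib

section
/- Let T > 0 and 0 < q ≤ 1, and let (x'_1, y'_1), …, (x'_n, y'_n) be pairs of positive reals such that each pair is a (q,T)-pair (i.e., x'_i ≤ T, y'_i ≤ T, and |x'_i − y'_i| ≤ qT) and Σ_{i=1}^n x'_i = Σ_{i=1}^n y'_i. Then there exists a permutation ρ of {1,…,n} such that the alternating sequence x'_{ρ(1)}, y'_{ρ(1)}, x'_{ρ(2)}, y'_{ρ(2)}, …, x'_{ρ(n)}, y'_{ρ(n)} has all prefix sums nonnegative and every prefix sum strictly less than (1+q)T. -/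
/-!
Put `d i = x i - y i`, so that `|d i| ≤ qT` and `∑ d i = 0`. The `d i` can be ordered so that
the partial sums `P₀ = 0, P₁, …, Pₙ = 0` stay nonnegative and are never `≥ qT` twice in a row:
from `P < qT`, take a step landing in `[0, qT)` if there is one; otherwise some step lands in
`[qT, 2qT)` (the remaining steps sum to `-P ≤ 0`, so not all of them go below `-P`), and from
there a remaining step comes back into `[0, qT)` (otherwise each remaining step, taken from `P`,
would also land in `[qT, ∞)` and so be positive, yet they sum to a negative number).

The prefix sums of the alternating sequence are `Pₜ + x` and `Pₜ₊₁ = Pₜ + x - y < Pₜ + x`, and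
`Pₜ + x = Pₜ₊₁ + y`; as `Pₜ < qT` or `Pₜ₊₁ < qT`, and `x, y ≤ T`, both are `< (1 + q)T`.
-/

open Finset

/-- The walk from `S` with increments `l` stays nonnegative and is never at height `≥ c` at two
consecutive times. -/
def IsTameWalk (c : ℝ) : ℝ → List ℝ → Prop
  | S, [] => 0 ≤ S
  | S, d :: l => 0 ≤ S ∧ (S < c ∨ S + d < c) ∧ IsTameWalk c (S + d) l

namespace IsTameWalk

variable {c S : ℝ} {l : List ℝ}

theorem nonneg (h : IsTameWalk c S l) : 0 ≤ S := by
  cases l with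
  | nil => exact h
  | cons d l => exact h.1

theorem bounds_take (h : IsTameWalk c S l) (k : ℕ) (hk : k < l.length) :
    0 ≤ S + (l.take k).sum ∧ 0 ≤ S + (l.take k).sum + l[k] ∧
      (S + (l.take k).sum < c ∨ S + (l.take k).sum + l[k] < c) := by
  induction l generalizing S k with
  | nil => simp at hk
  | cons d l ih =>
    obtain ⟨hS, hlow, hrest⟩ := h
    cases k with
    | zero => simpa using ⟨hS, hrest.nonneg, hlow⟩
    | succ k =>
      simpa only [List.take_succ_cons, List.sum_cons, List.getElem_cons_succ, add_assoc]
        using ih hrest k (by simpa using hk)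

end IsTameWalk

section Sequencing

variable {α : Type*} {v : α → ℝ} {c S : ℝ}

theorem List.sum_map_eq_add_sum_map_erase [DecidableEq α] {L : List α} {a : α} (ha : a ∈ L) :
    (L.map v).sum = v a + ((L.erase a).map v).sum := by
  simpa using ((List.perm_cons_erase ha).map v).sum_eq

theorem exists_mem_neg_le_of_add_sum_eq_zero {L : List α} (hL : L ≠ []) (hS : 0 ≤ S)
    (hsum : S + (L.map v).sum = 0) : ∃ a ∈ L, -S ≤ v a := by
  obtain ⟨b, L, rfl⟩ := List.exists_cons_of_ne_nil hL
  by_contra! h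
  have hrest : (L.map v).sum ≤ 0 :=
    (List.sum_le_card_nsmul _ 0 fun z hz => by
      obtain ⟨a, ha, rfl⟩ := List.mem_map.mp hz
      linarith [h a (List.mem_cons_of_mem b ha)]).trans_eq (smul_zero _)
  simp only [List.map_cons, List.sum_cons] at hsum
  linarith [h b List.mem_cons_self]

theorem exists_mem_add_lt_of_add_sum_eq_zero {R : List α} {S' : ℝ} (hS : 0 ≤ S) (hSc : S < c)
    (hR : ∀ b ∈ R, 0 ≤ S + v b → c ≤ S + v b) (hcS' : c ≤ S') (hS'le : S' ≤ S + c)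
    (hsum : S' + (R.map v).sum = 0) : ∃ b ∈ R, S' + v b < c := by
  by_contra! h
  have hpos : 0 ≤ (R.map v).sum :=
    List.sum_nonneg fun z hz => by
      obtain ⟨b, hb, rfl⟩ := List.mem_map.mp hz
      linarith [hR b hb (by linarith [h b hb])]
  linarith

theorem exists_perm_isTameWalk [DecidableEq α] (hv : ∀ a, |v a| ≤ c) {L : List α} {S : ℝ}
    (hS : 0 ≤ S) (hSc : S < c) (hsum : S + (L.map v).sum = 0) :
    ∃ L' : List α, L'.Perm L ∧ IsTameWalk c S (L'.map v) := by
  by_cases hA : ∃ a ∈ L, 0 ≤ S + v a ∧ S + v a < c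
  · obtain ⟨a, ha, ha0, hac⟩ := hA
    rw [List.sum_map_eq_add_sum_map_erase ha, ← add_assoc] at hsum
    obtain ⟨L', hperm, hwalk⟩ := exists_perm_isTameWalk hv ha0 hac hsum
    exact ⟨a :: L', (hperm.cons a).trans (List.perm_cons_erase ha).symm, hS, .inl hSc, hwalk⟩
  rcases eq_or_ne L [] with rfl | hL
  · exact ⟨[], .rfl, hS⟩
  push Not at hA
  obtain ⟨a, ha, hva⟩ := exists_mem_neg_le_of_add_sum_eq_zero hL hS hsum
  have hca : c ≤ S + v a := hA a ha (by linarith)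
  rw [List.sum_map_eq_add_sum_map_erase ha, ← add_assoc] at hsum
  obtain ⟨b, hb, hbc⟩ := exists_mem_add_lt_of_add_sum_eq_zero hS hSc
    (fun b hb => hA b (List.mem_of_mem_erase hb)) hca (by linarith [le_of_abs_le (hv a)]) hsum
  rw [List.sum_map_eq_add_sum_map_erase hb, ← add_assoc] at hsum
  obtain ⟨L', hperm, hwalk⟩ :=
    exists_perm_isTameWalk hv (by linarith [neg_le_of_abs_le (hv b)]) hbc hsum
  refine ⟨a :: b :: L', ?_, hS, .inl hSc, by linarith, .inr hbc, hwalk⟩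
  exact ((hperm.cons b).trans (List.perm_cons_erase hb).symm).cons a
    |>.trans (List.perm_cons_erase ha).symm
termination_by L.length
decreasing_by
  all_goals
    have := List.length_pos_of_mem ha
    grind [List.length_erase_of_mem, List.length_erase_le]

end Sequencing

theorem Fin.sum_Iio_eq_sum_take_ofFn {M : Type*} [AddCommMonoid M] {n : ℕ} (w : Fin n → M)
    (t : Fin n) : ∑ i ∈ Iio t, w i = ((List.ofFn w).take t).sum := by
  rw [← Fin.ofFn_take_eq_take_ofFn t.is_le', List.sum_ofFn]
  refine .symm (.trans (Finset.sum_map univ (Fin.castLEEmb t.is_le') w).symm ?_)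
  congr 1
  ext i
  simp only [mem_map, mem_univ, true_and, mem_Iio]
  exact ⟨fun ⟨j, hj⟩ => hj ▸ j.2, fun hi => ⟨⟨i, hi⟩, rfl⟩⟩

theorem List.Perm.exists_ofFn_eq {n : ℕ} {L : List (Fin n)} (h : L.Perm (List.finRange n)) :
    ∃ σ : Equiv.Perm (Fin n), List.ofFn σ = L := by
  have hlen : L.length = n := by simpa using h.length_eq
  have hinj : Function.Injective fun i : Fin n => L[i.cast hlen.symm] := by
    intro i j hij
    simpa [Fin.ext_iff] using (h.nodup_iff.mpr (List.nodup_finRange n)).getElem_inj_iff.mp hij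
  refine ⟨Equiv.ofBijective _ (Finite.injective_iff_bijective.mp hinj), ?_⟩
  exact List.ext_getElem (by simp [hlen]) fun k _ _ => by simp

theorem pair_prefix_bounds {P x y c T : ℝ} (hx : 0 < x) (hxT : x ≤ T) (hy : 0 < y) (hyT : y ≤ T)
    (hP : 0 ≤ P) (hP' : 0 ≤ x - y + P) (hlow : P < c ∨ x - y + P < c) :
    0 ≤ P + x ∧ 0 ≤ x - y + P ∧ P + x < c + T ∧ x - y + P < c + T := by
  refine ⟨by linarith, hP', ?_, ?_⟩ <;> rcases hlow with h | h <;> linarith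

theorem qT_pairs_sequencing_general
    (n : ℕ) (T q : ℝ) (hT : 0 < T) (hq0 : 0 < q)
    (x y : Fin n → ℝ)
    (hxpos : ∀ i, 0 < x i) (hypos : ∀ i, 0 < y i)
    (hxT : ∀ i, x i ≤ T) (hyT : ∀ i, y i ≤ T)
    (hqT : ∀ i, |x i - y i| ≤ q * T)
    (hsum : ∑ i, x i = ∑ i, y i) :
    ∃ ρ : Equiv.Perm (Fin n),
      ∀ t : Fin n,
        (0 ≤ (∑ i ∈ Finset.univ.filter (· < t), (x (ρ i) - y (ρ i))) + x (ρ t)) ∧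
        (0 ≤ ∑ i ∈ Finset.univ.filter (· ≤ t), (x (ρ i) - y (ρ i))) ∧
        ((∑ i ∈ Finset.univ.filter (· < t), (x (ρ i) - y (ρ i))) + x (ρ t) < (1 + q) * T) ∧
        (∑ i ∈ Finset.univ.filter (· ≤ t), (x (ρ i) - y (ρ i)) < (1 + q) * T) := by
  have hdsum : 0 + ((List.finRange n).map fun i => x i - y i).sum = 0 := by
    rw [← Fin.sum_univ_def, Finset.sum_sub_distrib, hsum, sub_self, zero_add]
  obtain ⟨L, hperm, hwalk⟩ := exists_perm_isTameWalk hqT le_rfl (mul_pos hq0 hT) hdsum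
  obtain ⟨ρ, rfl⟩ := hperm.exists_ofFn_eq
  refine ⟨ρ, fun t => ?_⟩
  rw [← List.ofFn_comp'] at hwalk
  obtain ⟨h0, h1, hlow⟩ := hwalk.bounds_take t (by simp)
  simp only [zero_add, List.getElem_ofFn] at h0 h1 hlow
  rw [add_comm] at h1 hlow
  rw [filter_ge_eq_Iic, ← Iio_insert, sum_insert notMem_Iio_self, filter_gt_eq_Iio,
    Fin.sum_Iio_eq_sum_take_ofFn fun i => x (ρ i) - y (ρ i), one_add_mul, add_comm T]
  exact pair_prefix_bounds (hxpos _) (hxT _) (hypos _) (hyT _) h0 h1 hlow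

/-- **Sequencing (q,T)-pairs.**
Given `n` pairs `(x'_i, y'_i)` of positive reals, each a `(q,T)`-pair
(`x'_i ≤ T`, `y'_i ≤ T`, `|x'_i − y'_i| ≤ qT`), with equal total sums,
there is a permutation `ρ` such that the alternating sequence
`x'_{ρ(1)}, y'_{ρ(1)}, …, x'_{ρ(n)}, y'_{ρ(n)}` has all prefix sums nonnegative
and strictly below `(1+q)T`. -/
theorem qT_pairs_sequencing
    (n : ℕ) (T q : ℝ) (hT : 0 < T) (hq0 : 0 < q) (hq1 : q ≤ 1)
    (x y : Fin n → ℝ)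
    (hxpos : ∀ i, 0 < x i) (hypos : ∀ i, 0 < y i)
    (hxT : ∀ i, x i ≤ T) (hyT : ∀ i, y i ≤ T)
    (hqT : ∀ i, |x i - y i| ≤ q * T)
    (hsum : ∑ i, x i = ∑ i, y i) :
    ∃ ρ : Equiv.Perm (Fin n),
      ∀ t : Fin n,
        (0 ≤ (∑ i ∈ Finset.univ.filter (· < t), (x (ρ i) - y (ρ i))) + x (ρ t)) ∧
        (0 ≤ ∑ i ∈ Finset.univ.filter (· ≤ t), (x (ρ i) - y (ρ i))) ∧
        ((∑ i ∈ Finset.univ.filter (· < t), (x (ρ i) - y (ρ i))) + x (ρ t) < (1 + q) * T) ∧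
        (∑ i ∈ Finset.univ.filter (· ≤ t), (x (ρ i) - y (ρ i)) < (1 + q) * T) :=
  qT_pairs_sequencing_general n T q hT hq0 x y hxpos hypos hxT hyT hqT hsum
end

section
/- Let x_1 ≥ x_2 ≥ … ≥ x_n and y_1 ≥ y_2 ≥ … ≥ y_n be positive reals with Σ_{i=1}^n x_i = Σ_{i=1}^n y_i, let μ = max(x_1, y_1), and let D = max_{1≤i≤n} |x_i − y_i|. Then there exists a feasible alternating ordering whose value is at most μ + D; in particular, since D ≤ μ, there always exists a feasible alternating ordering of value at most 2μ. -/
/-!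
Use the same permutation for `x` and `y`, so that the stock moves by `x i - y i` per pair.
Pairs with `x i ≥ y i` (surplus) and pairs with `x i < y i` (deficit, in decreasing order of `x`)
are merged greedily: the next deficit pair is taken whenever the current stock `s` covers
`y j - x j`, otherwise the next surplus pair. A surplus pair `p` is thus taken only when
`s < y j - x j ≤ D`, so its peak `s + x p` is at most `μ + D`; and the invariant `s + x j ≤ μ + D`
for the next deficit pair `j` survives both kinds of step (after `p` it becomes
`s + (x p - y p) + x j < y j + (x p - y p) ≤ μ + D`). Finally `|x i - y i| ≤ μ` for positive reals.
-/

namespace AlternatingStock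

open Finset

variable {ι : Type*} (x y : ι → ℝ)

def FeasibleFrom (B : ℝ) : ℝ → List ι → Prop
  | _, [] => True
  | s, i :: l => s + x i ≤ B ∧ 0 ≤ s + (x i - y i) ∧ FeasibleFrom B (s + (x i - y i)) l

variable {x y}

theorem FeasibleFrom.prefix_bounds {B s : ℝ} {l : List ι} (h : FeasibleFrom x y B s l)
    {t : ℕ} (ht : t < l.length) :
    0 ≤ s + ((l.map x).take (t + 1)).sum - ((l.map y).take (t + 1)).sum ∧
      s + ((l.map x).take (t + 1)).sum - ((l.map y).take t).sum ≤ B := by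
  induction l generalizing s t with
  | nil => simp at ht
  | cons i l ih =>
    obtain ⟨hpeak, hstock, hrest⟩ := h
    cases t with
    | zero => simpa [sub_nonneg] using ⟨by linarith, hpeak⟩
    | succ t =>
      obtain ⟨h₁, h₂⟩ := ih hrest (Nat.lt_of_succ_lt_succ ht)
      simp only [List.map_cons, List.take_succ_cons, List.sum_cons]
      constructor <;> linarith

variable (x y)

noncomputable def greedyMerge : List ι → List ι → ℝ → List ι
  | [], [], _ => []
  | p :: P, [], s => p :: greedyMerge P [] (s + (x p - y p))
  | [], j :: N, s => j :: greedyMerge [] N (s + (x j - y j))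
  | p :: P, j :: N, s =>
      if 0 ≤ s + (x j - y j) then j :: greedyMerge (p :: P) N (s + (x j - y j))
      else p :: greedyMerge P (j :: N) (s + (x p - y p))
  termination_by P N _ => P.length + N.length

theorem greedyMerge_perm (P N : List ι) (s : ℝ) : (greedyMerge x y P N s).Perm (P ++ N) := by
  induction P, N, s using greedyMerge.induct x y with
  | case1 s => simp [greedyMerge]
  | case2 p P s ih => rw [greedyMerge]; simpa using ih
  | case3 j N s ih => rw [greedyMerge]; simpa using ih
  | case4 p P j N s hc ih =>
    rw [greedyMerge, if_pos hc]
    exact (ih.cons j).trans List.perm_middle.symm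
  | case5 p P j N s hc ih =>
    rw [greedyMerge, if_neg hc]
    exact ih.cons p

variable {x y}

theorem feasibleFrom_greedyMerge {μ D : ℝ} (hxμ : ∀ i, x i ≤ μ) (hyμ : ∀ i, y i ≤ μ)
    (hD : ∀ i, |x i - y i| ≤ D) (P N : List ι) (s : ℝ)
    (hP : ∀ p ∈ P, y p ≤ x p) (hN : ∀ j ∈ N, x j < y j)
    (hN_sorted : N.Pairwise (fun a b => x b ≤ x a)) (hs : 0 ≤ s)
    (hbalance : s + (P.map fun i => x i - y i).sum + (N.map fun i => x i - y i).sum = 0)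
    (hhead : ∀ j ∈ N.head?, s + x j ≤ μ + D) :
    FeasibleFrom x y (μ + D) s (greedyMerge x y P N s) := by
  have hDu i : x i - y i ≤ D := (abs_le.mp (hD i)).2
  have hDl i : y i - x i ≤ D := by linarith [(abs_le.mp (hD i)).1]
  have hsurplus {P : List ι} (hP : ∀ p ∈ P, y p ≤ x p) : 0 ≤ (P.map fun i => x i - y i).sum :=
    List.sum_nonneg (by simpa using fun p hp => hP p hp)
  have hdeficit {N : List ι} (hN : ∀ j ∈ N, x j < y j) : (N.map fun i => x i - y i).sum ≤ 0 := by
    simpa using List.sum_le_sum fun j hj => sub_nonpos.mpr (hN j hj).le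
  revert hP hN hN_sorted hs hbalance hhead
  induction P, N, s using greedyMerge.induct x y with
  | case1 s => simp [greedyMerge, FeasibleFrom]
  | case2 p P s ih =>
    intro hP hN hN_sorted hs hbalance hhead
    have hp := hP p (by simp)
    have hP' : ∀ q ∈ P, y q ≤ x q := fun q hq => hP q (by simp [hq])
    have hrest := hsurplus hP'
    simp only [List.map_cons, List.sum_cons, List.map_nil, List.sum_nil] at hbalance
    rw [greedyMerge]
    refine ⟨?_, by linarith, ih hP' hN hN_sorted (by linarith) ?_ (by simp)⟩
    · linarith [hxμ p, (abs_nonneg _).trans (hD p)]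
    · simp only [List.map_nil, List.sum_nil]
      linarith
  | case3 j N s ih =>
    intro hP hN hN_sorted hs hbalance hhead
    have hN' : ∀ k ∈ N, x k < y k := fun k hk => hN k (by simp [hk])
    have hrest := hdeficit hN'
    simp only [List.map_cons, List.sum_cons, List.map_nil, List.sum_nil] at hbalance
    rw [greedyMerge]
    refine ⟨hhead j rfl, by linarith, ih hP hN' hN_sorted.of_cons (by linarith) ?_ ?_⟩
    · simp only [List.map_nil, List.sum_nil]
      linarith
    · intro k hk
      have := (List.pairwise_cons.mp hN_sorted).1 k (List.mem_of_mem_head? hk)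
      linarith [hhead j rfl, hN j (by simp)]
  | case4 p P j N s hc ih =>
    intro hP hN hN_sorted hs hbalance hhead
    have hN' : ∀ k ∈ N, x k < y k := fun k hk => hN k (by simp [hk])
    simp only [List.map_cons, List.sum_cons] at hbalance
    rw [greedyMerge, if_pos hc]
    refine ⟨hhead j rfl, hc, ih hP hN' hN_sorted.of_cons hc ?_ ?_⟩
    · simp only [List.map_cons, List.sum_cons]
      linarith
    · intro k hk
      have := (List.pairwise_cons.mp hN_sorted).1 k (List.mem_of_mem_head? hk)
      linarith [hhead j rfl, hN j (by simp)]
  | case5 p P j N s hc ih =>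
    intro hP hN hN_sorted hs hbalance hhead
    have hp := hP p (by simp)
    have hP' : ∀ q ∈ P, y q ≤ x q := fun q hq => hP q (by simp [hq])
    simp only [List.map_cons, List.sum_cons] at hbalance
    rw [greedyMerge, if_neg hc]
    -- the stock could not afford `j`, so it is below `y j - x j ≤ D`
    refine ⟨by linarith [hxμ p, hDl j], by linarith, ih hP' hN hN_sorted (by linarith) ?_ ?_⟩
    · simp only [List.map_cons, List.sum_cons]
      linarith
    · rintro k ⟨⟩
      linarith [hyμ j, hDu p]

theorem exists_ofFn_eq_of_perm_finRange {n : ℕ} {L : List (Fin n)} (h : L.Perm (List.finRange n)) :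
    ∃ σ : Equiv.Perm (Fin n), List.ofFn σ = L := by
  have hlen : L.length = n := by simpa using h.length_eq
  have hnodup : L.Nodup := h.nodup_iff.mpr (List.nodup_finRange n)
  refine ⟨(finCongr hlen.symm).trans
    (hnodup.getEquivOfForallMemList L fun i => h.mem_iff.mpr (List.mem_finRange i)), ?_⟩
  rw [List.ofFn_congr hlen.symm]
  simp

theorem exists_perm_feasible {n : ℕ} {x y : Fin n → ℝ} (hx : Antitone x) {μ D : ℝ}
    (hxμ : ∀ i, x i ≤ μ) (hyμ : ∀ i, y i ≤ μ) (hD : ∀ i, |x i - y i| ≤ D)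
    (hsum : ∑ i, x i = ∑ i, y i) :
    ∃ σ : Equiv.Perm (Fin n), ∀ t : Fin n,
      0 ≤ ∑ i ∈ univ.filter (· ≤ t), (x (σ i) - y (σ i)) ∧
        (∑ i ∈ univ.filter (· ≤ t), x (σ i)) - ∑ i ∈ univ.filter (· < t), y (σ i) ≤ μ + D := by
  set P := (List.finRange n).filter fun i => y i ≤ x i
  set N := (List.finRange n).filter fun i => !decide (y i ≤ x i)
  have hPN : (P ++ N).Perm (List.finRange n) := List.filter_append_perm _ _
  have hN_sorted : N.Pairwise (fun a b => x b ≤ x a) :=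
    ((List.pairwise_lt_finRange n).filter _).imp fun hab => hx hab.le
  have hbalance : 0 + (P.map fun i => x i - y i).sum + (N.map fun i => x i - y i).sum = 0 := by
    rw [zero_add, ← List.sum_append, ← List.map_append, (hPN.map _).sum_eq, ← Fin.sum_univ_def,
      sum_sub_distrib, hsum, sub_self]
  have hfeas := feasibleFrom_greedyMerge hxμ hyμ hD P N 0 (by simp [P]) (by simp [N]) hN_sorted
    le_rfl hbalance fun j _ => by linarith [hxμ j, (abs_nonneg _).trans (hD j)]
  obtain ⟨σ, hσ⟩ := exists_ofFn_eq_of_perm_finRange ((greedyMerge_perm x y P N 0).trans hPN)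
  refine ⟨σ, fun t => ?_⟩
  have hle : univ.filter (· ≤ t) = univ.filter fun j : Fin n => (j : ℕ) < t + 1 := by
    ext j
    simp only [mem_filter, mem_univ, true_and, Fin.le_def]
    omega
  have hlt : univ.filter (· < t) = univ.filter fun j : Fin n => (j : ℕ) < t := by
    ext j
    simp only [mem_filter, mem_univ, true_and, Fin.lt_def]
  have := hfeas.prefix_bounds (t := t) (by simp [← hσ])
  simp only [← hσ, List.map_ofFn, List.sum_take_ofFn, zero_add] at this
  rw [hle, hlt, sum_sub_distrib]
  exact this

end AlternatingStock

/-- **2-approximation bound for the alternating stock size problem.**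
For nonincreasing positive sequences `x, y` with equal sums, with `μ = max(x₁, y₁)`
and `D = max_i |x_i − y_i|`, there is a feasible alternating ordering whose value
(maximum prefix `∑_{i≤t} x_{σ(i)} − ∑_{i<t} y_{ν(i)}`) is at most `μ + D`;
in particular at most `2μ`. -/
theorem alternating_stock_size_two_approx
    (n : ℕ) (hn : 0 < n) (x y : Fin n → ℝ)
    (hx : Antitone x) (hy : Antitone y)
    (hxpos : ∀ i, 0 < x i) (hypos : ∀ i, 0 < y i)
    (hsum : ∑ i, x i = ∑ i, y i)
    (μ D : ℝ)
    (hμ : μ = max (x ⟨0, hn⟩) (y ⟨0, hn⟩))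
    (hD : D = Finset.univ.sup' ⟨⟨0, hn⟩, Finset.mem_univ _⟩ (fun i => |x i - y i|)) :
    ∃ σ ν : Equiv.Perm (Fin n),
      (∀ t : Fin n, 0 ≤ ∑ i ∈ Finset.univ.filter (· ≤ t), (x (σ i) - y (ν i))) ∧
      (∀ t : Fin n,
        (∑ i ∈ Finset.univ.filter (· ≤ t), x (σ i))
          - (∑ i ∈ Finset.univ.filter (· < t), y (ν i)) ≤ μ + D) ∧
      (∀ t : Fin n,
        (∑ i ∈ Finset.univ.filter (· ≤ t), x (σ i))
          - (∑ i ∈ Finset.univ.filter (· < t), y (ν i)) ≤ 2 * μ) := by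
  have hxμ i : x i ≤ μ := hμ ▸ (hx (Nat.zero_le i.val)).trans (le_max_left _ _)
  have hyμ i : y i ≤ μ := hμ ▸ (hy (Nat.zero_le i.val)).trans (le_max_right _ _)
  have habs i : |x i - y i| ≤ D := hD ▸ Finset.le_sup' (fun i => |x i - y i|) (Finset.mem_univ i)
  have hDμ : D ≤ μ := hD ▸ Finset.sup'_le _ _ fun i _ =>
    abs_sub_le_iff.mpr ⟨by linarith [hxμ i, hypos i], by linarith [hyμ i, hxpos i]⟩
  obtain ⟨σ, hσ⟩ := AlternatingStock.exists_perm_feasible hx hxμ hyμ habs hsum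
  exact ⟨σ, σ, fun t => (hσ t).1, fun t => (hσ t).2, fun t => by linarith [(hσ t).2]⟩
end

section
/- Let x'_1, …, x'_ℓ and y'_1, …, y'_ℓ be positive reals satisfying: (i) Σ_{i=1}^ℓ x'_i − Σ_{i=1}^ℓ y'_i ≥ 0; (ii) x'_1 − y'_1 ≥ 0; (iii) x'_i − y'_i ≤ 0 for 2 ≤ i ≤ ℓ; (iv) y'_1 ≥ y'_2 ≥ … ≥ y'_ℓ. Then the alternating sequence x'_1, y'_1, x'_2, y'_2, …, x'_ℓ, y'_ℓ has all prefix sums nonnegative, and every prefix sum is at most x'_1. -/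
/-! The differences `x'_i - y'_i` are nonpositive after the first index, so the partial sums of
`x' - y'` can only decrease, and since the full sum is nonnegative every partial sum is too.
For the upper bound, pair `x'_{i+1}` with `y'_i`: by (iii) and (iv), `x'_{i+1} ≤ y'_{i+1} ≤ y'_i`,
so after the first term `x'_1` each pair contributes a nonpositive amount. The prefixes ending in
some `y'_t` differ from those ending in `x'_t` by `y'_t > 0`, which transfers both bounds. -/

open Finset

section

variable {M : Type*} [AddCommMonoid M]

theorem Finset.sum_Icc_one_eq_sum_range (f : ℕ → M) (n : ℕ) :
    ∑ i ∈ Icc 1 n, f i = ∑ i ∈ range n, f (i + 1) := by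
  rw [range_eq_Ico, sum_Ico_add', zero_add, Ico_add_one_right_eq_Icc]

theorem Finset.sum_Icc_one_eq_sum_Icc_pred_add {n : ℕ} (hn : 1 ≤ n) (f : ℕ → M) :
    ∑ i ∈ Icc 1 n, f i = ∑ i ∈ Icc 1 (n - 1), f i + f n := by
  obtain ⟨m, rfl⟩ := Nat.exists_eq_add_of_le' hn
  exact sum_Icc_succ_top (Nat.le_add_left 1 m) f

variable [Preorder M] [AddLeftMono M]

theorem Finset.sum_Icc_le_sum_Icc_of_nonpos {a m n : ℕ} (hmn : m ≤ n) {f : ℕ → M}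
    (hf : ∀ i, m < i → i ≤ n → f i ≤ 0) :
    ∑ i ∈ Icc a n, f i ≤ ∑ i ∈ Icc a m, f i :=
  sum_le_sum_of_subset_of_nonpos' (Icc_subset_Icc_right hmn) fun i hi hi' => by
    simp only [mem_Icc, not_and, not_le] at hi hi'
    exact hf i (hi' hi.1) hi.2

theorem Finset.sum_Icc_one_le_add_sum_Icc_pred {n : ℕ} (hn : 1 ≤ n) {f g : ℕ → M}
    (hfg : ∀ i, 1 ≤ i → i < n → f (i + 1) ≤ g i) :
    ∑ i ∈ Icc 1 n, f i ≤ f 1 + ∑ i ∈ Icc 1 (n - 1), g i := by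
  obtain ⟨m, rfl⟩ := Nat.exists_eq_add_of_le' hn
  rw [Nat.add_sub_cancel, sum_Icc_one_eq_sum_range, sum_Icc_one_eq_sum_range, sum_range_succ',
    add_comm]
  gcongr with i hi
  exact hfg (i + 1) (Nat.le_add_left 1 i) (by simpa using mem_range.1 hi)

end

theorem alternating_batch_sequencing_general
    (ℓ : ℕ) (x' y' : ℕ → ℝ)
    (hypos : ∀ i, 1 ≤ i → i ≤ ℓ → 0 < y' i)
    (h1 : 0 ≤ ∑ i ∈ Finset.Icc 1 ℓ, x' i - ∑ i ∈ Finset.Icc 1 ℓ, y' i)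
    (h3 : ∀ i, 2 ≤ i → i ≤ ℓ → x' i - y' i ≤ 0)
    (h4 : ∀ i j, 1 ≤ i → i ≤ j → j ≤ ℓ → y' j ≤ y' i) :
    ∀ t, 1 ≤ t → t ≤ ℓ →
      (0 ≤ (∑ i ∈ Finset.Icc 1 t, x' i) - ∑ i ∈ Finset.Icc 1 (t - 1), y' i) ∧
      ((∑ i ∈ Finset.Icc 1 t, x' i) - (∑ i ∈ Finset.Icc 1 (t - 1), y' i) ≤ x' 1) ∧
      (0 ≤ (∑ i ∈ Finset.Icc 1 t, x' i) - ∑ i ∈ Finset.Icc 1 t, y' i) ∧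
      ((∑ i ∈ Finset.Icc 1 t, x' i) - (∑ i ∈ Finset.Icc 1 t, y' i) ≤ x' 1) := by
  intro t ht htℓ
  have hdiff : 0 ≤ ∑ i ∈ Icc 1 t, x' i - ∑ i ∈ Icc 1 t, y' i := by
    rw [← sum_sub_distrib] at h1 ⊢
    exact h1.trans <| sum_Icc_le_sum_Icc_of_nonpos htℓ fun i hti hiℓ => h3 i (by omega) hiℓ
  have hpaired : ∑ i ∈ Icc 1 t, x' i ≤ x' 1 + ∑ i ∈ Icc 1 (t - 1), y' i :=
    sum_Icc_one_le_add_sum_Icc_pred ht fun i hi hit =>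
      calc x' (i + 1) ≤ y' (i + 1) := sub_nonpos.1 (h3 (i + 1) (by omega) (by omega))
        _ ≤ y' i := h4 i (i + 1) hi (by omega) (by omega)
  have hy := sum_Icc_one_eq_sum_Icc_pred_add ht y'
  have hyt := hypos t ht htℓ
  refine ⟨?_, ?_, hdiff, ?_⟩ <;> linarith

/-- **Sequencing a large alternating batch.**
If positive reals `x'_1,…,x'_ℓ, y'_1,…,y'_ℓ` satisfy
(i) `Σ x'_i − Σ y'_i ≥ 0`, (ii) `x'_1 ≥ y'_1`, (iii) `x'_i ≤ y'_i` for `i ≥ 2`,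
(iv) `y'` nonincreasing, then the alternating sequence
`x'_1, y'_1, …, x'_ℓ, y'_ℓ` has all prefix sums in `[0, x'_1]`. -/
theorem alternating_batch_sequencing
    (ℓ : ℕ) (hℓ : 1 ≤ ℓ) (x' y' : ℕ → ℝ)
    (hxpos : ∀ i, 1 ≤ i → i ≤ ℓ → 0 < x' i)
    (hypos : ∀ i, 1 ≤ i → i ≤ ℓ → 0 < y' i)
    (h1 : 0 ≤ ∑ i ∈ Finset.Icc 1 ℓ, x' i - ∑ i ∈ Finset.Icc 1 ℓ, y' i)
    (h2 : 0 ≤ x' 1 - y' 1)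
    (h3 : ∀ i, 2 ≤ i → i ≤ ℓ → x' i - y' i ≤ 0)
    (h4 : ∀ i j, 1 ≤ i → i ≤ j → j ≤ ℓ → y' j ≤ y' i) :
    ∀ t, 1 ≤ t → t ≤ ℓ →
      (0 ≤ (∑ i ∈ Finset.Icc 1 t, x' i) - ∑ i ∈ Finset.Icc 1 (t - 1), y' i) ∧
      ((∑ i ∈ Finset.Icc 1 t, x' i) - (∑ i ∈ Finset.Icc 1 (t - 1), y' i) ≤ x' 1) ∧
      (0 ≤ (∑ i ∈ Finset.Icc 1 t, x' i) - ∑ i ∈ Finset.Icc 1 t, y' i) ∧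
      ((∑ i ∈ Finset.Icc 1 t, x' i) - (∑ i ∈ Finset.Icc 1 t, y' i) ≤ x' 1) :=
  alternating_batch_sequencing_general ℓ x' y' hypos h1 h3 h4
end

section
/- With the barrier notation below for C = (1−ε)μ, suppose n_a > n_b and let s be the smallest index in {1,…,n_a−n_b} with w'_s < εμ (assumed to exist). Define β'_i = w_i − v_i for i ∈ {1,…,h} and LB = (1/(n_a−n_b−s+1)) · ( 2·Σ_{i=s}^{n_a−n_b} a'_i − Σ_{i=s}^{n_a−n_b} w'_i + Σ_{i=1}^{h} (v_i − w_i) ). If LB < 2μ/(2−ε) and 2(1−ε) − 2/(2−ε) > 2ε, then Σ_{i=1}^{h} β'_i + Σ_{i=s}^{n_a−n_b} w'_i > 2εμ·(n_a−n_b−s+1). -/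
/-!
Each `a'_i` with `s ≤ i ≤ n_a − n_b` lies above the barrier `C = (1−ε)μ`, so
`2·Σ a'_i ≥ 2(1−ε)μ·m` with `m = n_a − n_b − s + 1`. Feeding this into `LB < 2μ/(2−ε)` gives
`Σ β'_i + Σ w'_i > (2(1−ε) − 2/(2−ε))·μ·m`, and the condition on `ε` turns the right-hand
side into more than `2εμ·m`.
-/

lemma Finset.cast_card_Icc {R : Type*} [AddCommGroupWithOne R] {s t : ℕ} (h : s ≤ t + 1) :
    ((Finset.Icc s t).card : R) = t - s + 1 := by
  rw [Nat.card_Icc, Nat.cast_sub h, Nat.cast_add, Nat.cast_one]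
  abel

lemma lt_sub_of_barrier_bound {A W B m μ ε : ℝ} (hm : 0 < m) (hμ : 0 < μ)
    (hA : m * ((1 - ε) * μ) ≤ A) (hLB : (2 * A - W + B) / m < 2 * μ / (2 - ε))
    (hε : 2 * (1 - ε) - 2 / (2 - ε) > 2 * ε) :
    2 * ε * μ * m < W - B := by
  have hLB' : 2 * A - W + B < m * μ * (2 / (2 - ε)) := by
    rw [div_lt_iff₀ hm] at hLB
    linarith [show 2 * μ / (2 - ε) * m = m * μ * (2 / (2 - ε)) by ring]
  have hgap : m * μ * (2 * ε) < m * μ * (2 * (1 - ε) - 2 / (2 - ε)) :=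
    mul_lt_mul_of_pos_left hε (mul_pos hm hμ)
  linarith

theorem batch_construction_key_inequality_general
    (n : ℕ) (hn : 1 ≤ n) (x y : ℕ → ℝ) (ε : ℝ)
    (hxpos : ∀ i, 1 ≤ i → i ≤ n → 0 < x i)
    (μ C : ℝ) (hμ : μ = max (x 1) (y 1)) (hC : C = (1 - ε) * μ)
    (na nb : ℕ) (hnan : na ≤ n)
    (hna : ∀ i, 1 ≤ i → i ≤ n → (C ≤ x i ↔ i ≤ na))
    (h : ℕ)
    (s : ℕ) (hs1 : 1 ≤ s) (hs2 : s ≤ na - nb)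
    (hLB : (2 * ∑ i ∈ Finset.Icc s (na - nb), x (nb + i)
        - ∑ i ∈ Finset.Icc s (na - nb), y (nb + i)
        + ∑ i ∈ Finset.Icc 1 h, (x (n + 1 - i) - y (na + i)))
        / ((na : ℝ) - (nb : ℝ) - (s : ℝ) + 1) < 2 * μ / (2 - ε))
    (hcond : 2 * (1 - ε) - 2 / (2 - ε) > 2 * ε) :
    2 * ε * μ * ((na : ℝ) - (nb : ℝ) - (s : ℝ) + 1) <
      (∑ i ∈ Finset.Icc 1 h, (y (na + i) - x (n + 1 - i)))
        + ∑ i ∈ Finset.Icc s (na - nb), y (nb + i) := by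
  have hμ_pos : 0 < μ := hμ ▸ lt_max_of_lt_left (hxpos 1 le_rfl hn)
  have hcard : ((Finset.Icc s (na - nb)).card : ℝ) = (na : ℝ) - nb - s + 1 := by
    rw [Finset.cast_card_Icc (by omega), Nat.cast_sub (by omega)]
  have hm_pos : (0 : ℝ) < (na : ℝ) - nb - s + 1 := by
    rw [← hcard]
    exact_mod_cast Finset.card_pos.mpr (Finset.nonempty_Icc.mpr hs2)
  have hA : ((na : ℝ) - nb - s + 1) * ((1 - ε) * μ) ≤
      ∑ i ∈ Finset.Icc s (na - nb), x (nb + i) := by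
    rw [← hcard, ← nsmul_eq_mul]
    refine Finset.card_nsmul_le_sum _ _ _ fun i hi => ?_
    rw [Finset.mem_Icc] at hi
    exact hC ▸ (hna (nb + i) (by omega) (by omega)).mpr (by omega)
  have key := lt_sub_of_barrier_bound hm_pos hμ_pos hA hLB hcond
  rw [Finset.sum_sub_distrib] at key ⊢
  linarith

/-- **Key inequality for constructing alternating batches.**
With barrier `C = (1−ε)μ`, `n_a > n_b`, `s` the smallest index in `{1,…,n_a−n_b}`
with `w'_s < εμ`, `β'_i = w_i − v_i`, and
`LB = (2·Σ_{i=s}^{na−nb} a'_i − Σ_{i=s}^{na−nb} w'_i + Σ_{i=1}^h (v_i − w_i))/(na−nb−s+1)`: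
if `LB < 2μ/(2−ε)` and `2(1−ε) − 2/(2−ε) > 2ε`, then
`Σ_{i=1}^h β'_i + Σ_{i=s}^{na−nb} w'_i > 2εμ(na−nb−s+1)`.
(Here, 1-indexed, `a'_i = x (nb+i)`, `w'_i = y (nb+i)`, `v_j = x (n+1−j)`,
`w_j = y (na+j)`.) -/
theorem batch_construction_key_inequality
    (n : ℕ) (hn : 1 ≤ n) (x y : ℕ → ℝ) (ε : ℝ) (hε0 : 0 < ε) (hε1 : ε < 1)
    (hxpos : ∀ i, 1 ≤ i → i ≤ n → 0 < x i)
    (hypos : ∀ i, 1 ≤ i → i ≤ n → 0 < y i)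
    (hxsort : ∀ i j, 1 ≤ i → i ≤ j → j ≤ n → x j ≤ x i)
    (hysort : ∀ i j, 1 ≤ i → i ≤ j → j ≤ n → y j ≤ y i)
    (hsum : ∑ i ∈ Finset.Icc 1 n, x i = ∑ i ∈ Finset.Icc 1 n, y i)
    (μ C : ℝ) (hμ : μ = max (x 1) (y 1)) (hC : C = (1 - ε) * μ)
    (na nb k : ℕ) (hnan : na ≤ n) (hnbna : nb < na) (hk : k = n - na)
    (hna : ∀ i, 1 ≤ i → i ≤ n → (C ≤ x i ↔ i ≤ na))
    (hnb : ∀ i, 1 ≤ i → i ≤ n → (C ≤ y i ↔ i ≤ nb))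
    (h : ℕ) (hhk : h ≤ k)
    (hh1 : ∀ j, 1 ≤ j → j ≤ h → x (n + 1 - j) < y (na + j))
    (hh2 : ∀ j, h < j → j ≤ k → y (na + j) ≤ x (n + 1 - j))
    (s : ℕ) (hs1 : 1 ≤ s) (hs2 : s ≤ na - nb)
    (hws : y (nb + s) < ε * μ)
    (hsmin : ∀ i, 1 ≤ i → i < s → ε * μ ≤ y (nb + i))
    (hLB : (2 * ∑ i ∈ Finset.Icc s (na - nb), x (nb + i)
        - ∑ i ∈ Finset.Icc s (na - nb), y (nb + i)
        + ∑ i ∈ Finset.Icc 1 h, (x (n + 1 - i) - y (na + i)))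
        / ((na : ℝ) - (nb : ℝ) - (s : ℝ) + 1) < 2 * μ / (2 - ε))
    (hcond : 2 * (1 - ε) - 2 / (2 - ε) > 2 * ε) :
    2 * ε * μ * ((na : ℝ) - (nb : ℝ) - (s : ℝ) + 1) <
      (∑ i ∈ Finset.Icc 1 h, (y (na + i) - x (n + 1 - i)))
        + ∑ i ∈ Finset.Icc s (na - nb), y (nb + i) :=
  batch_construction_key_inequality_general n hn x y ε hxpos μ C hμ hC na nb hnan hna h s hs1 hs2
    hLB hcond
end

section
/- Let ε = 0.21, let μ > 0 and d ≥ 1 be an integer. Let a'_1, …, a'_d be reals in [(1−ε)μ, μ], let w'_1, …, w'_d be reals in [0, εμ), and let β'_1, …, β'_h be reals in (0, εμ] such that Σ_{j=1}^{h} β'_j + Σ_{p=1}^{d} w'_p > 2εμ·d. Then there exist pairwise disjoint subsets S_1, …, S_d of {1,…,h} such that for every p ∈ {1,…,d}: 0 ≤ a'_p − w'_p − Σ_{j∈S_p} β'_j ≤ (1−ε)μ. -/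
/-!
The large pair `p` has imbalance `t p = a' p - w' p ∈ ((1-2ε)μ, μ]`, and must be brought into the window
`((1-2ε)μ, (1-ε)μ]` of width `εμ` by removing small excesses, each at most `εμ`. Removing them
one at a time, the value cannot jump over the window, so each large pair consumes less than
`t p - (1-2ε)μ ≤ 2εμ - w' p` from the pool; the hypothesis `Σ β' + Σ w' > 2εμd` says the pool
never runs dry.
-/

open Finset

variable {ι κ α : Type*} [AddCommGroup α] [LinearOrder α] [IsOrderedAddMonoid α]

theorem exists_subset_sub_sum_mem_Ioc (T : Finset κ) (β : κ → α) {L U t : α}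
    (hβ : ∀ j ∈ T, β j ≤ U - L) (ht : L < t) (hT : t - U ≤ ∑ j ∈ T, β j) :
    ∃ S ⊆ T, t - ∑ j ∈ S, β j ∈ Set.Ioc L U := by
  induction T using Finset.cons_induction generalizing t with
  | empty => exact ⟨∅, subset_refl _, by simpa using ht, by simpa [sub_nonpos] using hT⟩
  | cons j T hj ih =>
    by_cases htU : t ≤ U
    · exact ⟨∅, empty_subset _, by simpa using ht, by simpa using htU⟩
    have hβj := hβ j (mem_cons_self j T)
    rw [sum_cons] at hT
    obtain ⟨S, hST, hS⟩ := ih (t := t - β j) (fun k hk => hβ k (mem_cons_of_mem hk))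
      (lt_sub_comm.1 (hβj.trans_lt (sub_lt_sub_right (not_le.1 htU) L)))
      (by rwa [sub_right_comm, sub_le_iff_le_add'])
    refine ⟨cons j S (fun h => hj (hST h)), cons_subset_cons.2 hST, ?_⟩
    rwa [sum_cons, ← sub_sub]

theorem exists_pairwiseDisjoint_sub_sum_mem_Ioc [DecidableEq ι] [DecidableEq κ]
    (P : Finset ι) (T : Finset κ) (t : ι → α) (β : κ → α) {L U : α}
    (hβ : ∀ j ∈ T, β j ≤ U - L) (ht : ∀ p ∈ P, L < t p)
    (hP : ∑ p ∈ P, (t p - L) ≤ ∑ j ∈ T, β j) :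
    ∃ S : ι → Finset κ, (∀ p ∈ P, S p ⊆ T) ∧ (P : Set ι).PairwiseDisjoint S ∧
      ∀ p ∈ P, t p - ∑ j ∈ S p, β j ∈ Set.Ioc L U := by
  induction P using Finset.induction_on generalizing T with
  | empty => exact ⟨fun _ => ∅, by simp, by simp, by simp⟩
  | insert p P hp ih =>
    rw [sum_insert hp] at hP
    have htp := ht p (mem_insert_self p P)
    have hrest : 0 ≤ ∑ q ∈ P, (t q - L) :=
      sum_nonneg fun q hq => sub_nonneg.2 (ht q (mem_insert_of_mem hq)).le
    have htpT : t p - L ≤ ∑ j ∈ T, β j := (le_add_of_nonneg_right hrest).trans hP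
    have hLU : L ≤ U := by
      obtain ⟨j, hj, hβj⟩ := exists_lt_of_sum_lt (s := T) (f := 0) (g := β) <| by
        simpa using (sub_pos.2 htp).trans_le htpT
      exact sub_nonneg.1 ((le_of_lt hβj).trans (hβ j hj))
    obtain ⟨S₀, hS₀T, hS₀⟩ := exists_subset_sub_sum_mem_Ioc T β hβ htp
      ((sub_le_sub_left hLU _).trans htpT)
    have hrestT : ∑ q ∈ P, (t q - L) ≤ ∑ j ∈ T \ S₀, β j := by
      rw [sum_sdiff_eq_sub hS₀T, le_sub_iff_add_le]
      calc ∑ q ∈ P, (t q - L) + ∑ j ∈ S₀, β j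
          ≤ ∑ q ∈ P, (t q - L) + (t p - L) := add_le_add_right (lt_sub_comm.1 hS₀.1).le _
        _ = t p - L + ∑ q ∈ P, (t q - L) := add_comm _ _
        _ ≤ ∑ j ∈ T, β j := hP
    obtain ⟨S, hST, hSdisj, hS⟩ := ih (T \ S₀) (fun j hj => hβ j (mem_sdiff.1 hj).1)
      (fun q hq => ht q (mem_insert_of_mem hq)) hrestT
    have hS_ne (q) (hq : q ∈ P) : Function.update S p S₀ q = S q :=
      Function.update_of_ne (ne_of_mem_of_not_mem hq hp) _ _
    refine ⟨Function.update S p S₀, ?_, ?_, ?_⟩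
    · simp only [forall_mem_insert, Function.update_self]
      exact ⟨hS₀T, fun q hq => (hS_ne q hq).trans_subset ((hST q hq).trans sdiff_subset)⟩
    · rw [coe_insert, Set.pairwiseDisjoint_insert_of_notMem (mem_coe.not.2 hp)]
      refine ⟨fun q hq r hr hqr => ?_, fun q hq => ?_⟩
      · change Disjoint _ _
        rw [hS_ne q hq, hS_ne r hr]
        exact hSdisj hq hr hqr
      · rw [Function.update_self, hS_ne q hq]
        exact disjoint_sdiff.mono_right (hST q hq)
    · simp only [forall_mem_insert, Function.update_self]
      exact ⟨hS₀, fun q hq => hS_ne q hq ▸ hS q hq⟩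

theorem distribute_small_pairs_general
    (μ : ℝ) (hμ : 0 < μ) (d h : ℕ)
    (a' w' β' : ℕ → ℝ)
    (ha : ∀ p, 1 ≤ p → p ≤ d → (1 - 0.21) * μ ≤ a' p ∧ a' p ≤ μ)
    (hw : ∀ p, 1 ≤ p → p ≤ d → 0 ≤ w' p ∧ w' p < 0.21 * μ)
    (hβ : ∀ j, 1 ≤ j → j ≤ h → 0 < β' j ∧ β' j ≤ 0.21 * μ)
    (hsum : 2 * 0.21 * μ * (d : ℝ) <
      (∑ j ∈ Finset.Icc 1 h, β' j) + ∑ p ∈ Finset.Icc 1 d, w' p) :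
    ∃ S : ℕ → Finset ℕ,
      (∀ p, 1 ≤ p → p ≤ d → S p ⊆ Finset.Icc 1 h) ∧
      (∀ p q, 1 ≤ p → p ≤ d → 1 ≤ q → q ≤ d → p ≠ q → Disjoint (S p) (S q)) ∧
      (∀ p, 1 ≤ p → p ≤ d →
        0 ≤ a' p - w' p - ∑ j ∈ S p, β' j ∧
        a' p - w' p - ∑ j ∈ S p, β' j ≤ (1 - 0.21) * μ) := by
  have hdemand : ∑ p ∈ Icc 1 d, (a' p - w' p - (1 - 2 * 0.21) * μ) ≤ ∑ j ∈ Icc 1 h, β' j :=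
    calc ∑ p ∈ Icc 1 d, (a' p - w' p - (1 - 2 * 0.21) * μ)
        ≤ ∑ p ∈ Icc 1 d, (2 * 0.21 * μ - w' p) := sum_le_sum fun p hp => by
          obtain ⟨hp1, hpd⟩ := mem_Icc.1 hp
          linarith [ha p hp1 hpd]
      _ = 2 * 0.21 * μ * d - ∑ p ∈ Icc 1 d, w' p := by
          rw [sum_sub_distrib, sum_const, Nat.card_Icc, nsmul_eq_mul]
          push_cast
          ring
      _ ≤ ∑ j ∈ Icc 1 h, β' j := by linarith
  obtain ⟨S, hST, hSdisj, hS⟩ := exists_pairwiseDisjoint_sub_sum_mem_Ioc (Icc 1 d) (Icc 1 h)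
    (fun p => a' p - w' p) β' (L := (1 - 2 * 0.21) * μ) (U := (1 - 0.21) * μ)
    (fun j hj => by obtain ⟨hj1, hjh⟩ := mem_Icc.1 hj; linarith [hβ j hj1 hjh])
    (fun p hp => by obtain ⟨hp1, hpd⟩ := mem_Icc.1 hp; linarith [ha p hp1 hpd, hw p hp1 hpd])
    hdemand
  refine ⟨S, fun p hp1 hpd => hST p (mem_Icc.2 ⟨hp1, hpd⟩),
    fun p q hp1 hpd hq1 hqd hpq => hSdisj (mem_Icc.2 ⟨hp1, hpd⟩) (mem_Icc.2 ⟨hq1, hqd⟩) hpq,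
    fun p hp1 hpd => ?_⟩
  obtain ⟨hlow, hhigh⟩ := hS p (mem_Icc.2 ⟨hp1, hpd⟩)
  exact ⟨by linarith, hhigh⟩

/-- **Distributing small pairs among large pairs (ε = 0.21).**
Given `μ > 0`, `d ≥ 1`, values `a'_p ∈ [(1−ε)μ, μ]`, `w'_p ∈ [0, εμ)` for
`p ∈ {1,…,d}`, and `β'_j ∈ (0, εμ]` for `j ∈ {1,…,h}` with
`Σ β'_j + Σ w'_p > 2εμd`, there exist pairwise disjoint subsets
`S_1,…,S_d ⊆ {1,…,h}` with `0 ≤ a'_p − w'_p − Σ_{j∈S_p} β'_j ≤ (1−ε)μ` for all `p`. -/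
theorem distribute_small_pairs
    (μ : ℝ) (hμ : 0 < μ) (d h : ℕ) (hd : 1 ≤ d)
    (a' w' β' : ℕ → ℝ)
    (ha : ∀ p, 1 ≤ p → p ≤ d → (1 - 0.21) * μ ≤ a' p ∧ a' p ≤ μ)
    (hw : ∀ p, 1 ≤ p → p ≤ d → 0 ≤ w' p ∧ w' p < 0.21 * μ)
    (hβ : ∀ j, 1 ≤ j → j ≤ h → 0 < β' j ∧ β' j ≤ 0.21 * μ)
    (hsum : 2 * 0.21 * μ * (d : ℝ) <
      (∑ j ∈ Finset.Icc 1 h, β' j) + ∑ p ∈ Finset.Icc 1 d, w' p) :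
    ∃ S : ℕ → Finset ℕ,
      (∀ p, 1 ≤ p → p ≤ d → S p ⊆ Finset.Icc 1 h) ∧
      (∀ p q, 1 ≤ p → p ≤ d → 1 ≤ q → q ≤ d → p ≠ q → Disjoint (S p) (S q)) ∧
      (∀ p, 1 ≤ p → p ≤ d →
        0 ≤ a' p - w' p - ∑ j ∈ S p, β' j ∧
        a' p - w' p - ∑ j ∈ S p, β' j ≤ (1 - 0.21) * μ) :=
  distribute_small_pairs_general μ hμ d h a' w' β' ha hw hβ hsum
end

section
/- (Correctness of the NP-hardness reduction.) Let k ≥ 1, n = 3k, and let z_1, …, z_n be rationals with 1/4 < z_i < 1/2 for all i and Σ_{i=1}^n z_i = k. Consider the alternating stock size instance with x-values x_1 = … = x_{n+k} = 1 and y-values y_i = 1 − z_i for i ∈ {1,…,n} and y_i = 2 for i ∈ {n+1,…,n+k}. Then {1,…,n} can be partitioned into k triples each with z-sum exactly 1 if and only if there exists a feasible alternating ordering of this instance with value at most 2. -/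
/-!
With all x-values equal to 1, an ordering `(σ, ν)` has value at most 2 exactly when the prefix
sums `S m = ∑ i < m, (1 - y (ν i))` all lie in `[0, 1]`. An item with `y = 1 - z j` raises `S` by
`z j ∈ (1/4, 1/2)` and an item with `y = 2` lowers it by 1. Given a 3-partition, listing each
triple followed by one item of size 2 keeps `S` in `[0, 1]`. Conversely, `S` has to drop from 1
to 0 at every item of size 2, so the small items between two consecutive such items have z-sum
exactly 1, hence there are three of them; since `S` ends at 0, no small item comes after the
last item of size 2, so these blocks exhaust the small items.
-/

open Finset

section PrefixSum

variable {M : Type*} {N : ℕ}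

def prefixSum [AddCommMonoid M] (f : Fin N → M) (m : ℕ) : M :=
  ∑ i ∈ univ.filter (fun i : Fin N => (i : ℕ) < m), f i

section AddCommMonoid

variable [AddCommMonoid M] (f : Fin N → M)

@[simp] lemma prefixSum_zero : prefixSum f 0 = 0 := by simp [prefixSum]

lemma prefixSum_of_le {m : ℕ} (hm : N ≤ m) : prefixSum f m = ∑ i, f i := by
  rw [prefixSum, filter_true_of_mem fun i _ => i.2.trans_le hm]

lemma prefixSum_succ (i : Fin N) : prefixSum f (i + 1) = prefixSum f i + f i := by
  have : univ.filter (fun j : Fin N => (j : ℕ) < i + 1) =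
      insert i (univ.filter fun j : Fin N => (j : ℕ) < i) := by
    ext j
    simp [le_iff_eq_or_lt, Fin.val_inj]
  rw [prefixSum, this, sum_insert (by simp), add_comm, prefixSum]

lemma prefixSum_eq_sum_range (G : ℕ → M) {m : ℕ} (hm : m ≤ N) :
    prefixSum (fun i : Fin N => G i) m = ∑ j ∈ range m, G j := by
  induction m with
  | zero => simp
  | succ m ih => rw [sum_range_succ, ← ih (by omega), ← prefixSum_succ _ ⟨m, hm⟩]

lemma sum_filter_le_eq_prefixSum (t : Fin N) :
    ∑ i ∈ univ.filter (· ≤ t), f i = prefixSum f (t + 1) := by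
  simp only [prefixSum, Nat.lt_succ_iff, Fin.val_fin_le]

lemma sum_filter_lt_eq_prefixSum (t : Fin N) :
    ∑ i ∈ univ.filter (· < t), f i = prefixSum f t := by
  simp only [prefixSum, Fin.val_fin_lt]

lemma prefixSum_mono [PartialOrder M] [IsOrderedAddMonoid M] (hf : 0 ≤ f) :
    Monotone (prefixSum f) := fun _ _ h =>
  sum_le_sum_of_subset_of_nonneg (monotone_filter_right _ fun _ _ hi => hi.trans_le h)
    fun i _ _ => hf i

end AddCommMonoid

lemma prefixSum_sub [AddCommGroup M] (f g : Fin N → M) (m : ℕ) :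
    prefixSum (fun i => f i - g i) m = prefixSum f m - prefixSum g m :=
  sum_sub_distrib ..

end PrefixSum

lemma sum_one_sub_comp_perm {N : ℕ} (Y : Fin N → ℚ) (hY : ∑ i, Y i = N)
    (ν : Equiv.Perm (Fin N)) : ∑ i, (1 - Y (ν i)) = 0 := by
  simp [sum_sub_distrib, ν.sum_comp, hY]

theorem exists_ordering_iff {N : ℕ} (X Y : Fin N → ℚ) (hX : ∀ i, X i = 1)
    (hY : ∑ i, Y i = N) :
    (∃ σ ν : Equiv.Perm (Fin N),
        (∀ t : Fin N, 0 ≤ ∑ i ∈ Finset.univ.filter (· ≤ t), (X (σ i) - Y (ν i))) ∧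
        (∀ t : Fin N, (∑ i ∈ Finset.univ.filter (· ≤ t), X (σ i))
            - (∑ i ∈ Finset.univ.filter (· < t), Y (ν i)) ≤ 2)) ↔
      ∃ ν : Equiv.Perm (Fin N), ∀ m ≤ N,
        prefixSum (fun i => 1 - Y (ν i)) m ∈ Set.Icc 0 1 := by
  have hfeas_eq (σ ν : Equiv.Perm (Fin N)) (t : Fin N) :
      ∑ i ∈ univ.filter (· ≤ t), (X (σ i) - Y (ν i)) =
        prefixSum (fun i => 1 - Y (ν i)) (t + 1) := by
    simp only [hX, sum_filter_le_eq_prefixSum]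
  have hval_eq (σ ν : Equiv.Perm (Fin N)) (t : Fin N) :
      (∑ i ∈ univ.filter (· ≤ t), X (σ i)) - ∑ i ∈ univ.filter (· < t), Y (ν i)
        = 1 + prefixSum (fun i => 1 - Y (ν i)) t := by
    simp only [hX, sum_filter_le_eq_prefixSum, sum_filter_lt_eq_prefixSum, prefixSum_succ,
      prefixSum_sub]
    ring
  constructor
  · rintro ⟨σ, ν, hfeas_le, hval_le⟩
    refine ⟨ν, fun m hm => ?_⟩
    rcases hm.lt_or_eq with hm | rfl
    · refine ⟨?_, by linarith [hval_eq σ ν ⟨m, hm⟩ ▸ hval_le ⟨m, hm⟩]⟩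
      rcases m with _ | t
      · simp
      · exact hfeas_eq σ ν ⟨t, by omega⟩ ▸ hfeas_le ⟨t, by omega⟩
    · simp [prefixSum_of_le, sum_one_sub_comp_perm Y hY ν]
  · rintro ⟨ν, hν⟩
    refine ⟨1, ν, fun t => ?_, fun t => ?_⟩
    · exact hfeas_eq 1 ν t ▸ (hν (t + 1) t.2).1
    · linarith [hval_eq 1 ν t, (hν t t.2.le).2]

section NegCount

variable {N : ℕ} (g : Fin N → ℚ)

def negCount (m : ℕ) : ℕ := prefixSum (fun i => if g i < 0 then 1 else 0) m

@[simp] lemma negCount_zero : negCount g 0 = 0 := prefixSum_zero _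

lemma negCount_succ (i : Fin N) :
    negCount g (i + 1) = negCount g i + if g i < 0 then 1 else 0 :=
  prefixSum_succ _ i

lemma negCount_mono : Monotone (negCount g) :=
  prefixSum_mono _ fun _ => Nat.zero_le _

variable {g}

lemma negCount_le_negCount_iff {p : Fin N} (hp : g p < 0) {m : ℕ} :
    negCount g m ≤ negCount g p ↔ m ≤ p := by
  refine ⟨fun h => ?_, fun h => negCount_mono g h⟩
  by_contra! hpm
  have := negCount_mono g (Nat.succ_le_of_lt hpm)
  rw [negCount_succ, if_pos hp] at this
  omega

lemma exists_negCount_eq {a : ℕ} (ha : a < negCount g N) :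
    ∃ p, g p < 0 ∧ negCount g p = a := by
  have hex : ∃ m, a < negCount g m := ⟨N, ha⟩
  -- the least `m` with `a < negCount g m` is `p + 1` for the wanted `p`
  obtain ⟨p, hp⟩ : ∃ p, Nat.find hex = p + 1 :=
    Nat.exists_eq_succ_of_ne_zero fun h => by simpa [h] using Nat.find_spec hex
  have hpN : p < N := by have := Nat.find_min' hex ha; omega
  have hlt : a < negCount g (p + 1) := hp ▸ Nat.find_spec hex
  have hle : negCount g p ≤ a := not_lt.1 (Nat.find_min hex (by omega))
  have hsucc : negCount g (p + 1) = negCount g p + if g ⟨p, hpN⟩ < 0 then 1 else 0 :=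
    negCount_succ g ⟨p, hpN⟩
  split_ifs at hsucc with hneg
  · exact ⟨⟨p, hpN⟩, hneg, (by omega : negCount g p = a)⟩
  · omega

variable (hg : ∀ i, g i = -1 ∨ 0 < g i)
include hg

lemma sum_filter_lt_and_pos (m : ℕ) :
    ∑ i ∈ univ.filter (fun i : Fin N => (i : ℕ) < m ∧ 0 < g i), g i =
      prefixSum g m + negCount g m := by
  have hpos_part (i : Fin N) :
      (if 0 < g i then g i else 0) = g i + ((if g i < 0 then 1 else 0 : ℕ) : ℚ) := by
    rcases hg i with h | h <;> simp [h, h.le]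
  rw [← filter_filter, sum_filter, negCount, prefixSum, prefixSum, Nat.cast_sum,
    ← sum_add_distrib]
  exact sum_congr rfl fun i _ => hpos_part i

variable (hS : ∀ m ≤ N, prefixSum g m ∈ Set.Icc 0 1)
include hS

lemma prefixSum_succ_eq_zero_of_neg {p : Fin N} (hp : g p < 0) : prefixSum g (p + 1) = 0 := by
  have hgp : g p = -1 := (hg p).resolve_right hp.not_gt
  have hlo := (hS (p + 1) p.2).1
  have hhi := (hS p p.2.le).2
  rw [prefixSum_succ, hgp] at hlo ⊢
  linarith

lemma sum_filter_negCount_lt_and_pos {a : ℕ} (ha : a ≤ negCount g N) :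
    ∑ i ∈ univ.filter (fun i : Fin N => negCount g i < a ∧ 0 < g i), g i = a := by
  rcases a with _ | a
  · simp
  obtain ⟨p, hp, rfl⟩ := exists_negCount_eq (g := g) (by omega : a < negCount g N)
  have hblock (i : Fin N) : negCount g i < negCount g p + 1 ↔ (i : ℕ) < p + 1 := by
    rw [Nat.lt_succ_iff, Nat.lt_succ_iff, negCount_le_negCount_iff hp]
  simp_rw [hblock]
  rw [sum_filter_lt_and_pos hg, prefixSum_succ_eq_zero_of_neg hg hS hp, negCount_succ, if_pos hp]
  push_cast
  ring

lemma sum_filter_negCount_eq_and_pos {a : ℕ} (ha : a < negCount g N) :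
    ∑ i ∈ univ.filter (fun i : Fin N => negCount g i = a ∧ 0 < g i), g i = 1 := by
  have hsucc := sum_filter_negCount_lt_and_pos hg hS ha
  have hsplit : univ.filter (fun i : Fin N => negCount g i < a + 1 ∧ 0 < g i) =
      univ.filter (fun i : Fin N => negCount g i < a ∧ 0 < g i) ∪
        univ.filter (fun i : Fin N => negCount g i = a ∧ 0 < g i) := by
    ext i
    simp only [mem_filter, mem_univ, true_and, mem_union, Nat.lt_succ_iff_lt_or_eq, or_and_right]
  rw [hsplit, sum_union (disjoint_filter.2 fun i _ h h' => by omega),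
    sum_filter_negCount_lt_and_pos hg hS ha.le] at hsucc
  push_cast at hsucc
  linarith

lemma negCount_lt_of_pos (htot : ∑ i, g i = 0) {i : Fin N} (hi : 0 < g i) :
    negCount g i < negCount g N := by
  by_contra! hle
  have hall :
      ∑ j ∈ univ.filter (fun j : Fin N => (j : ℕ) < N ∧ 0 < g j), g j = negCount g N := by
    rw [sum_filter_lt_and_pos hg, prefixSum_of_le _ le_rfl, htot, zero_add]
  have hsub : univ.filter (fun j : Fin N => negCount g j < negCount g N ∧ 0 < g j) ⊆
      univ.filter (fun j : Fin N => (j : ℕ) < N ∧ 0 < g j) :=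
    monotone_filter_right univ fun j _ hj => ⟨j.2, hj.2⟩
  have hlt := sum_lt_sum_of_subset hsub (i := i) (by simp [hi]) (by simp [hle]) hi
    fun j hj _ => (mem_filter.1 hj).2.2.le
  rw [sum_filter_negCount_lt_and_pos hg hS le_rfl, hall] at hlt
  exact hlt.false

end NegCount

lemma card_eq_three_of_sum_eq_one {ι K : Type*} [Field K] [LinearOrder K] [IsStrictOrderedRing K]
    {s : Finset ι} {f : ι → K} (hf : ∀ i ∈ s, 1 / 4 < f i ∧ f i < 1 / 2)
    (hs : ∑ i ∈ s, f i = 1) : #s = 3 := by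
  have hne : s.Nonempty := nonempty_of_sum_ne_zero (hs ▸ one_ne_zero)
  have hlo := sum_lt_sum_of_nonempty hne fun i hi => (hf i hi).1
  have hhi := sum_lt_sum_of_nonempty hne fun i hi => (hf i hi).2
  rw [sum_const, nsmul_eq_mul, hs] at hlo hhi
  have h2 : (2 : K) < #s := by linarith
  have h4 : (#s : K) < 4 := by linarith
  norm_cast at h2 h4
  omega

lemma sum_range_mem_Icc_of_blocks {k : ℕ} {G : ℕ → ℚ}
    (hbig : ∀ a : Fin k, G (4 * a + 3) = -1)
    (hsmall : ∀ (a : Fin k) (r : Fin 3), 0 ≤ G (4 * a + r))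
    (hblock : ∀ a : Fin k, ∑ r : Fin 3, G (4 * a + r) = 1) {m : ℕ} (hm : m ≤ 4 * k) :
    ∑ j ∈ range m, G j ∈ Set.Icc 0 1 := by
  have hblock' (a : Fin k) : G (4 * a) + G (4 * a + 1) + G (4 * a + 2) = 1 := by
    simpa [Fin.sum_univ_three] using hblock a
  have hzero (a : ℕ) (ha : a ≤ k) : ∑ j ∈ range (4 * a), G j = 0 := by
    induction a with
    | zero => simp
    | succ a ih =>
      rw [show 4 * (a + 1) = 4 * a + 3 + 1 by ring]
      simp only [sum_range_succ, ih (by omega), hbig ⟨a, ha⟩]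
      linarith [hblock' ⟨a, ha⟩]
  obtain ⟨a, r, hr, rfl⟩ : ∃ a r, r < 4 ∧ m = 4 * a + r :=
    ⟨m / 4, m % 4, by omega, by omega⟩
  rcases Nat.eq_zero_or_pos r with rfl | hr0
  · simp [hzero a (by omega)]
  have ha : a < k := by omega
  have h0 := hsmall ⟨a, ha⟩ 0
  have h1 := hsmall ⟨a, ha⟩ 1
  have h2 := hsmall ⟨a, ha⟩ 2
  have hb := hblock' ⟨a, ha⟩
  simp only [Fin.val_zero, Fin.val_one, Fin.val_two, add_zero] at h0 h1 h2 hb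
  interval_cases r <;> simp only [sum_range_succ, hzero a ha.le] <;> constructor <;> linarith

section Reduction

variable {k : ℕ} {z : ℕ → ℚ} {Y : Fin (4 * k) → ℚ}
  (hY : ∀ i : Fin (4 * k), Y i = if (i : ℕ) < 3 * k then 1 - z ((i : ℕ) + 1) else 2)
include hY

lemma sum_Y_eq (hzsum : ∑ i ∈ Icc 1 (3 * k), z i = (k : ℚ)) :
    ∑ i, Y i = (4 * k : ℕ) := by
  have hz : ∑ j ∈ range (3 * k), z (j + 1) = k := by
    rw [← hzsum, ← Ico_add_one_right_eq_Icc, sum_Ico_eq_sum_range]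
    simp [add_comm]
  simp only [hY]
  rw [Fin.sum_univ_eq_sum_range (fun j => if j < 3 * k then 1 - z (j + 1) else 2),
    show 4 * k = 3 * k + k by ring, sum_range_add,
    sum_congr rfl fun j hj => if_pos (mem_range.1 hj),
    sum_congr rfl fun j _ => if_neg (Nat.not_lt.2 (Nat.le_add_right (3 * k) j)),
    sum_sub_distrib, hz, sum_const, sum_const, card_range, card_range]
  push_cast
  ring

lemma one_sub_Y_of_lt {j : Fin (4 * k)} (hj : (j : ℕ) < 3 * k) : 1 - Y j = z (j + 1) := by
  simp [hY, hj]

lemma one_sub_Y_of_le {j : Fin (4 * k)} (hj : 3 * k ≤ (j : ℕ)) : 1 - Y j = -1 := by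
  norm_num [hY, not_lt.2 hj]

variable (hz : ∀ i, 1 ≤ i → i ≤ 3 * k → 1 / 4 < z i ∧ z i < 1 / 2)
include hz

lemma one_sub_Y_mem_Ioo {j : Fin (4 * k)} (hj : (j : ℕ) < 3 * k) :
    1 / 4 < 1 - Y j ∧ 1 - Y j < 1 / 2 :=
  one_sub_Y_of_lt hY hj ▸ hz _ (by omega) (by omega)

lemma pos_one_sub_Y_iff (j : Fin (4 * k)) : 0 < 1 - Y j ↔ (j : ℕ) < 3 * k := by
  refine ⟨fun h => ?_, fun hj => by linarith [one_sub_Y_mem_Ioo hY hz hj]⟩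
  by_contra! hj
  rw [one_sub_Y_of_le hY hj] at h
  norm_num at h

lemma negCount_one_sub_Y_comp_perm (ν : Equiv.Perm (Fin (4 * k))) :
    negCount (fun i => 1 - Y (ν i)) (4 * k) = k := by
  have hneg (j : Fin (4 * k)) : 1 - Y j < 0 ↔ ¬(j : ℕ) < 3 * k :=
    ⟨fun h hj => lt_asymm h ((pos_one_sub_Y_iff hY hz j).2 hj),
      fun hj => (one_sub_Y_of_le hY (not_lt.1 hj)).trans_lt (by norm_num)⟩
  simp only [negCount, prefixSum_of_le _ le_rfl, hneg]
  rw [Equiv.sum_comp ν (fun j : Fin (4 * k) => if ¬(j : ℕ) < 3 * k then 1 else 0),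
    ← card_filter, filter_not, card_sdiff_of_subset (filter_subset _ _),
    Fin.card_filter_val_lt, card_univ, Fintype.card_fin]
  omega

lemma exists_perm_of_partition (P : Fin k → Finset ℕ)
    (hdisj : ∀ a b : Fin k, a ≠ b → Disjoint (P a) (P b))
    (hunion : univ.biUnion P = Icc 1 (3 * k)) (hcard : ∀ a, #(P a) = 3)
    (hsum : ∀ a, ∑ i ∈ P a, z i = 1) :
    ∃ ν : Equiv.Perm (Fin (4 * k)), ∀ m ≤ 4 * k,
      prefixSum (fun i => 1 - Y (ν i)) m ∈ Set.Icc 0 1 := by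
  let e (a : Fin k) : Fin 3 ≃ P a := ((P a).equivFinOfCardEq (hcard a)).symm
  have he (a : Fin k) (r : Fin 3) : 1 ≤ (e a r : ℕ) ∧ (e a r : ℕ) ≤ 3 * k :=
    mem_Icc.1 (hunion ▸ mem_biUnion.2 ⟨a, mem_univ a, (e a r).2⟩)
  -- block `a` fills positions `4a, …, 4a + 3`: the triple `P a`, then the item `3k + a` of size 2
  let item (x : Fin k × Fin 4) : Fin (4 * k) :=
    Fin.lastCases ⟨3 * k + x.1, by omega⟩
      (fun r => ⟨e x.1 r - 1, by have := he x.1 r; omega⟩) x.2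
  have hinj : Function.Injective item := by
    rintro ⟨a, r⟩ ⟨b, s⟩ h
    induction r using Fin.lastCases <;> induction s using Fin.lastCases <;>
      simp only [item, Fin.lastCases_last, Fin.lastCases_castSucc, Fin.mk.injEq, Prod.mk.injEq,
        Fin.castSucc_inj, and_true] at h ⊢
    · exact Fin.ext (by omega)
    · have := he b ‹_›; omega
    · have := he a ‹_›; omega
    case cast.cast r s =>
      have hrs : (e a r : ℕ) = e b s := by have := he a r; have := he b s; omega
      obtain rfl : a = b := by
        by_contra hab
        exact disjoint_left.1 (hdisj a b hab) (e a r).2 (hrs ▸ (e b s).2)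
      exact ⟨rfl, (e a).injective (Subtype.ext hrs)⟩
  have hbij : Function.Bijective item :=
    (Fintype.bijective_iff_injective_and_card item).2 ⟨hinj, by simp [Nat.mul_comm]⟩
  let pos : Fin k × Fin 4 ≃ Fin (4 * k) := finProdFinEquiv.trans (finCongr (Nat.mul_comm k 4))
  let ν := pos.symm.trans (Equiv.ofBijective item hbij)
  obtain ⟨G, hGν⟩ : ∃ G : ℕ → ℚ, ∀ i : Fin (4 * k), G i = 1 - Y (ν i) :=
    ⟨Function.extend Fin.val (fun i => 1 - Y (ν i)) 0, Fin.val_injective.extend_apply _ _⟩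
  have hG (a : Fin k) (r : Fin 4) : G (4 * a + r) = 1 - Y (item (a, r)) := by
    rw [show 4 * (a : ℕ) + r = pos (a, r) by simp [pos, add_comm], hGν]
    simp [ν]
  have hsmall (a : Fin k) (r : Fin 3) : G (4 * a + r) = z (e a r) := by
    have hlt : ((item (a, r.castSucc) : Fin (4 * k)) : ℕ) < 3 * k := by
      simp only [item, Fin.lastCases_castSucc]; have := he a r; omega
    rw [← Fin.val_castSucc r, hG, one_sub_Y_of_lt hY hlt]
    simp only [item, Fin.lastCases_castSucc, Nat.sub_add_cancel (he a r).1]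
  refine ⟨ν, fun m hm => ?_⟩
  rw [show (fun i => 1 - Y (ν i)) = fun i : Fin (4 * k) => G i from
    funext fun i => (hGν i).symm, prefixSum_eq_sum_range G hm]
  refine sum_range_mem_Icc_of_blocks (fun a => ?_) (fun a r => ?_) (fun a => ?_) hm
  · rw [← Fin.val_last 3, hG,
      one_sub_Y_of_le hY (by simp only [item, Fin.lastCases_last]; omega)]
  · have := he a r
    exact hsmall a r ▸ (hz _ this.1 this.2).1.le.trans' (by norm_num)
  · simp only [hsmall, ← hsum a, ← sum_coe_sort (P a)]
    exact (e a).sum_comp fun x => z x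

lemma exists_partition_of_perm (ν : Equiv.Perm (Fin (4 * k)))
    (hν : ∀ m ≤ 4 * k, prefixSum (fun i => 1 - Y (ν i)) m ∈ Set.Icc 0 1)
    (htot : ∑ i, (1 - Y (ν i)) = 0) :
    ∃ P : Fin k → Finset ℕ, (∀ a b : Fin k, a ≠ b → Disjoint (P a) (P b)) ∧
      univ.biUnion P = Icc 1 (3 * k) ∧ (∀ a, #(P a) = 3) ∧
      (∀ a, ∑ i ∈ P a, z i = 1) := by
  set g : Fin (4 * k) → ℚ := fun i => 1 - Y (ν i)
  have hpos (i : Fin (4 * k)) : 0 < g i ↔ (ν i : ℕ) < 3 * k := pos_one_sub_Y_iff hY hz (ν i)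
  have hg (i : Fin (4 * k)) : g i = -1 ∨ 0 < g i := by
    by_cases hi : (ν i : ℕ) < 3 * k
    · exact .inr ((hpos i).2 hi)
    · exact .inl (one_sub_Y_of_le hY (not_lt.1 hi))
  have hblock (a : Fin k) :
      ∑ i ∈ univ.filter (fun i : Fin (4 * k) => negCount g i = a ∧ 0 < g i), g i = 1 :=
    sum_filter_negCount_eq_and_pos hg hν
      (a.2.trans_eq (negCount_one_sub_Y_comp_perm hY hz ν).symm)
  let f (i : Fin (4 * k)) : ℕ := ν i + 1
  have hf : Function.Injective f := fun i j h => ν.injective (Fin.ext (by simpa [f] using h))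
  -- triple `a` consists of the small items preceded by exactly `a` items of size 2
  refine ⟨fun a => (univ.filter fun i : Fin (4 * k) => negCount g i = a ∧ 0 < g i).image f,
    fun a b hab => ?_, ?_, fun a => ?_, fun a => ?_⟩
  · rw [disjoint_image hf]
    exact disjoint_filter.2 fun i _ ha hb => hab (Fin.ext (ha.1.symm.trans hb.1))
  · ext j
    simp only [mem_biUnion, mem_univ, true_and, mem_image, mem_filter, mem_Icc, hpos, f]
    constructor
    · rintro ⟨a, i, ⟨-, hi⟩, rfl⟩
      omega
    · rintro ⟨hj1, hj3⟩
      let i := ν.symm ⟨j - 1, by omega⟩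
      have hi : (ν i : ℕ) = j - 1 := by simp [i]
      have hlt := negCount_lt_of_pos hg hν htot ((hpos i).2 (by omega))
      rw [negCount_one_sub_Y_comp_perm hY hz ν] at hlt
      exact ⟨⟨negCount g i, hlt⟩, i, ⟨rfl, by omega⟩, by omega⟩
  · rw [card_image_of_injective _ hf]
    exact card_eq_three_of_sum_eq_one
      (fun i hi => one_sub_Y_mem_Ioo hY hz ((hpos i).1 (mem_filter.1 hi).2.2)) (hblock a)
  · rw [sum_image hf.injOn, ← hblock a]
    exact sum_congr rfl fun i hi => (one_sub_Y_of_lt hY ((hpos i).1 (mem_filter.1 hi).2.2)).symm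

end Reduction

theorem three_partition_reduction_general
    (k : ℕ) (z : ℕ → ℚ)
    (hz : ∀ i, 1 ≤ i → i ≤ 3 * k → 1 / 4 < z i ∧ z i < 1 / 2)
    (hzsum : ∑ i ∈ Finset.Icc 1 (3 * k), z i = (k : ℚ))
    (X Y : Fin (4 * k) → ℚ)
    (hX : ∀ i, X i = 1)
    (hY : ∀ i : Fin (4 * k),
      Y i = if (i : ℕ) < 3 * k then 1 - z ((i : ℕ) + 1) else 2) :
    (∃ P : Fin k → Finset ℕ,
        (∀ a b : Fin k, a ≠ b → Disjoint (P a) (P b)) ∧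
        Finset.univ.biUnion P = Finset.Icc 1 (3 * k) ∧
        (∀ a, (P a).card = 3) ∧
        (∀ a, ∑ i ∈ P a, z i = 1)) ↔
    (∃ σ ν : Equiv.Perm (Fin (4 * k)),
        (∀ t : Fin (4 * k),
          0 ≤ ∑ i ∈ Finset.univ.filter (· ≤ t), (X (σ i) - Y (ν i))) ∧
        (∀ t : Fin (4 * k),
          (∑ i ∈ Finset.univ.filter (· ≤ t), X (σ i))
            - (∑ i ∈ Finset.univ.filter (· < t), Y (ν i)) ≤ 2)) := by
  have hYsum := sum_Y_eq hY hzsum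
  rw [exists_ordering_iff X Y hX hYsum]
  constructor
  · rintro ⟨P, hdisj, hunion, hcard, hsum⟩
    exact exists_perm_of_partition hY hz P hdisj hunion hcard hsum
  · rintro ⟨ν, hν⟩
    exact exists_partition_of_perm hY hz ν hν (sum_one_sub_comp_perm Y hYsum ν)

/-- **Correctness of the NP-hardness reduction from 3-partition.**
Given rationals `z_1,…,z_{3k} ∈ (1/4, 1/2)` summing to `k`, consider the
alternating stock size instance with `4k` x-values all equal to `1` and y-values
`y_i = 1 − z_i` for `i ≤ 3k` and `y_i = 2` otherwise.  Then `{1,…,3k}` can be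
partitioned into `k` triples each of z-sum `1` iff there is a feasible
alternating ordering of value at most `2`. -/
theorem three_partition_reduction
    (k : ℕ) (hk : 1 ≤ k) (z : ℕ → ℚ)
    (hz : ∀ i, 1 ≤ i → i ≤ 3 * k → 1 / 4 < z i ∧ z i < 1 / 2)
    (hzsum : ∑ i ∈ Finset.Icc 1 (3 * k), z i = (k : ℚ))
    (X Y : Fin (4 * k) → ℚ)
    (hX : ∀ i, X i = 1)
    (hY : ∀ i : Fin (4 * k),
      Y i = if (i : ℕ) < 3 * k then 1 - z ((i : ℕ) + 1) else 2) :
    (∃ P : Fin k → Finset ℕ,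
        (∀ a b : Fin k, a ≠ b → Disjoint (P a) (P b)) ∧
        Finset.univ.biUnion P = Finset.Icc 1 (3 * k) ∧
        (∀ a, (P a).card = 3) ∧
        (∀ a, ∑ i ∈ P a, z i = 1)) ↔
    (∃ σ ν : Equiv.Perm (Fin (4 * k)),
        (∀ t : Fin (4 * k),
          0 ≤ ∑ i ∈ Finset.univ.filter (· ≤ t), (X (σ i) - Y (ν i))) ∧
        (∀ t : Fin (4 * k),
          (∑ i ∈ Finset.univ.filter (· ≤ t), X (σ i))
            - (∑ i ∈ Finset.univ.filter (· < t), Y (ν i)) ≤ 2)) :=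
  three_partition_reduction_general k z hz hzsum X Y hX hY
end

section
/- Let x_1 ≥ x_2 ≥ … ≥ x_n be reals. For every n×n doubly stochastic matrix Z = (z_{ij}) there exists an n×n doubly stochastic matrix T = (t_{ij}) that has the consecutiveness property and satisfies Σ_{i=1}^n t_{ij}·x_i = Σ_{i=1}^n z_{ij}·x_i for every column j ∈ {1,…,n}. -/
/-!
For strictly decreasing `x`, maximize the potential `Σ_{i,j} x_i² j t_{ij}` over the compact set
of doubly stochastic `t` with the prescribed sums `Σ_i t_{ij} x_i`. If a maximizer violated
consecutiveness at column `j` with rows `i₁ < i₂ < i₃`, row `i₂` would carry mass in some later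
column `j'`; shifting mass in column `j` from rows `i₁, i₃` to row `i₂` (in the proportions that
keep `Σ_i t_{ij} x_i`) and back in column `j'` raises the potential, by strict convexity of `x²`.
For merely decreasing `x`, note that consecutiveness is a closed condition and the doubly
stochastic matrices are compact, so the set of `x` admitting such a `t` is closed; it contains
the strictly decreasing vectors, which are dense among the decreasing ones.
-/

open Finset Filter Topology Matrix

section

variable {m : Type*} [Fintype m] [DecidableEq m]

lemma isCompact_doublyStochastic : IsCompact (doublyStochastic ℝ m : Set (Matrix m m ℝ)) := by
  refine (isCompact_univ_pi fun _ => isCompact_univ_pi fun _ => isCompact_Icc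
    (a := (0 : ℝ)) (b := 1)).of_isClosed_subset ?_ fun t ht => ?_
  · have hnonneg : IsClosed {t : Matrix m m ℝ | ∀ i j, 0 ≤ t i j} := by
      simp only [Set.ofPred_forall]
      exact isClosed_iInter fun i => isClosed_iInter fun j =>
        isClosed_le continuous_const ((continuous_apply j).comp (continuous_apply i))
    exact hnonneg.inter <|
      (isClosed_eq (continuous_id.matrix_mulVec continuous_const) continuous_const).inter
        (isClosed_eq (continuous_const.matrix_vecMul continuous_id) continuous_const)
  · simp only [Set.mem_pi, Set.mem_univ, true_implies]
    exact fun i j => ⟨nonneg_of_mem_doublyStochastic ht, le_one_of_mem_doublyStochastic ht⟩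

/-- Moves `δ` from `(a, j)` to `(b, j)` and from `(b, j')` to `(a, j')`. -/
def transfer (t : Matrix m m ℝ) (a b j j' : m) (δ : ℝ) : Matrix m m ℝ :=
  t + δ • vecMulVec (Pi.single b 1 - Pi.single a 1) (Pi.single j 1 - Pi.single j' 1)

variable {t : Matrix m m ℝ} {a b j j' : m} {δ : ℝ}

lemma transfer_mem_doublyStochastic (ht : t ∈ doublyStochastic ℝ m) (hab : a ≠ b) (hj : j ≠ j')
    (hδ : 0 ≤ δ) (ha : δ ≤ t a j) (hb : δ ≤ t b j') :
    transfer t a b j j' δ ∈ doublyStochastic ℝ m := by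
  refine ⟨fun i k => ?_, ?_, ?_⟩
  · have := nonneg_of_mem_doublyStochastic ht (i := i) (j := k)
    simp only [transfer, Matrix.add_apply, Matrix.smul_apply, vecMulVec_apply, Pi.sub_apply,
      Pi.single_apply, smul_eq_mul]
    split_ifs <;> subst_vars <;> simp_all <;> linarith
  · simp [transfer, add_mulVec, smul_mulVec, vecMulVec_mulVec,
      mulVec_one_of_mem_doublyStochastic ht]
  · simp [transfer, vecMul_add, vecMul_smul, vecMul_vecMulVec,
      one_vecMul_of_mem_doublyStochastic ht]

lemma vecMul_transfer (v : m → ℝ) :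
    v ᵥ* transfer t a b j j' δ = v ᵥ* t + (δ * (v b - v a)) • (Pi.single j 1 - Pi.single j' 1) := by
  simp [transfer, vecMul_add, vecMul_smul, vecMul_vecMulVec, dotProduct_sub, smul_smul]

lemma dotProduct_transfer_mulVec (u w : m → ℝ) :
    u ⬝ᵥ (transfer t a b j j' δ *ᵥ w) = u ⬝ᵥ (t *ᵥ w) + δ * (u b - u a) * (w j - w j') := by
  simp [transfer, add_mulVec, smul_mulVec, vecMulVec_mulVec, dotProduct_sub, sub_dotProduct]
  ring

end

variable {n : ℕ}

def IsConsecutive (t : Matrix (Fin n) (Fin n) ℝ) : Prop :=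
  ∀ j i1 i2 i3 : Fin n, i1 < i2 → i2 < i3 → 0 < t i1 j → 0 < t i3 j →
    ∑ j' ∈ univ.filter (· ≤ j), t i2 j' = 1

lemma isClosed_setOf_isConsecutive :
    IsClosed {t : Matrix (Fin n) (Fin n) ℝ | IsConsecutive t} := by
  have hcont (i j : Fin n) : Continuous fun t : Matrix (Fin n) (Fin n) ℝ => t i j :=
    (continuous_apply j).comp (continuous_apply i)
  simp only [IsConsecutive, imp_iff_not_or, not_lt, Set.ofPred_forall, Set.ofPred_or]
  refine isClosed_iInter fun j => isClosed_iInter fun i1 => isClosed_iInter fun i2 =>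
    isClosed_iInter fun i3 => ?_
  exact isClosed_const.union <| isClosed_const.union <|
    (isClosed_le (hcont i1 j) continuous_const).union <|
    (isClosed_le (hcont i3 j) continuous_const).union <|
    isClosed_eq (continuous_finsetSum _ fun j' _ => hcont i2 j') continuous_const

lemma exists_lt_pos_of_sum_filter_le_ne_one {t : Matrix (Fin n) (Fin n) ℝ}
    (ht : t ∈ doublyStochastic ℝ (Fin n)) {i j : Fin n}
    (hi : ∑ j' ∈ univ.filter (· ≤ j), t i j' ≠ 1) : ∃ j', j < j' ∧ 0 < t i j' := by
  by_contra! h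
  refine hi ?_
  rw [← sum_row_of_mem_doublyStochastic ht i, ← sum_filter_add_sum_filter_not univ (· ≤ j),
    left_eq_add]
  exact sum_eq_zero fun j' hj' =>
    (h j' (not_le.1 (mem_filter.1 hj').2)).antisymm (nonneg_of_mem_doublyStochastic ht)

def potential (x : Fin n → ℝ) (t : Matrix (Fin n) (Fin n) ℝ) : ℝ :=
  (fun i => x i ^ 2) ⬝ᵥ (t *ᵥ fun j => (j : ℝ))

lemma exists_potential_lt {x : Fin n → ℝ} (hx : StrictAnti x) {t : Matrix (Fin n) (Fin n) ℝ}
    (ht : t ∈ doublyStochastic ℝ (Fin n)) {i1 i2 i3 j j' : Fin n} (h12 : i1 < i2) (h23 : i2 < i3)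
    (hjj' : j < j') (h1 : 0 < t i1 j) (h3 : 0 < t i3 j) (h2 : 0 < t i2 j') :
    ∃ t' ∈ doublyStochastic ℝ (Fin n), x ᵥ* t' = x ᵥ* t ∧ potential x t < potential x t' := by
  have hx12 := hx h12
  have hx23 := hx h23
  obtain ⟨ε, hε, hε1, hε3, hε2⟩ :
      ∃ ε : ℝ, 0 < ε ∧ ε ≤ t i1 j ∧ ε ≤ t i3 j ∧ ε ≤ t i2 j' :=
    ⟨min (min (t i1 j) (t i3 j)) (t i2 j'), lt_min (lt_min h1 h3) h2,
      (min_le_left _ _).trans (min_le_left _ _), (min_le_left _ _).trans (min_le_right _ _),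
      min_le_right _ _⟩
  obtain ⟨L, hL0, hL1, hL⟩ : ∃ L : ℝ, 0 ≤ L ∧ 0 ≤ 1 - L ∧ L * (x i1 - x i3) = x i2 - x i3 := by
    refine ⟨(x i2 - x i3) / (x i1 - x i3), div_nonneg (by linarith) (by linarith), ?_,
      div_mul_cancel₀ _ (by linarith)⟩
    rw [sub_nonneg, div_le_one (by linarith)]
    linarith
  -- `L x_{i₁} + (1 - L) x_{i₃} = x_{i₂}`, and the potential gains
  -- `ε (x_{i₁} - x_{i₂}) (x_{i₂} - x_{i₃}) (j' - j)`.
  refine ⟨L • transfer t i1 i2 j j' ε + (1 - L) • transfer t i3 i2 j j' ε,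
    convex_doublyStochastic
      (transfer_mem_doublyStochastic ht h12.ne hjj'.ne hε.le hε1 hε2)
      (transfer_mem_doublyStochastic ht h23.ne' hjj'.ne hε.le hε3 hε2)
      hL0 hL1 (add_sub_cancel _ _), ?_, ?_⟩
  · rw [vecMul_add, vecMul_smul, vecMul_smul, vecMul_transfer, vecMul_transfer]
    ext k
    simp only [Pi.add_apply, Pi.smul_apply, smul_eq_mul]
    linear_combination (-ε * (Pi.single j 1 - Pi.single j' 1 : Fin n → ℝ) k) * hL
  · have hj : (j : ℝ) < j' := by exact_mod_cast hjj'
    have key : 0 < ε * ((x i1 - x i2) * (x i2 - x i3)) * ((j' : ℝ) - j) :=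
      mul_pos (mul_pos hε (mul_pos (by linarith) (by linarith))) (by linarith)
    simp only [potential, add_mulVec, smul_mulVec, dotProduct_add, dotProduct_smul,
      dotProduct_transfer_mulVec, smul_eq_mul]
    linear_combination key - ε * ((j' : ℝ) - j) * (x i1 + x i3) * hL

lemma exists_isConsecutive_of_strictAnti {x : Fin n → ℝ} (hx : StrictAnti x)
    {z : Matrix (Fin n) (Fin n) ℝ} (hz : z ∈ doublyStochastic ℝ (Fin n)) :
    ∃ t ∈ doublyStochastic ℝ (Fin n), IsConsecutive t ∧ x ᵥ* t = x ᵥ* z := by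
  have hK : IsCompact {t | t ∈ doublyStochastic ℝ (Fin n) ∧ x ᵥ* t = x ᵥ* z} :=
    isCompact_doublyStochastic.inter_right
      (isClosed_eq (continuous_const.matrix_vecMul continuous_id) continuous_const)
  have hpot : Continuous (potential x) :=
    continuous_const.dotProduct (continuous_id.matrix_mulVec continuous_const)
  obtain ⟨t, ⟨ht, htx⟩, hmax⟩ := hK.exists_isMaxOn ⟨z, hz, rfl⟩ hpot.continuousOn
  refine ⟨t, ht, fun j i1 i2 i3 h12 h23 h1 h3 => ?_, htx⟩
  by_contra hi2
  obtain ⟨j', hjj', h2⟩ := exists_lt_pos_of_sum_filter_le_ne_one ht hi2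
  obtain ⟨t', ht', ht'x, hlt⟩ := exists_potential_lt hx ht h12 h23 hjj' h1 h3 h2
  exact (hmax ⟨ht', ht'x.trans htx⟩).not_gt hlt

lemma isClosed_setOf_exists_isConsecutive (z : Matrix (Fin n) (Fin n) ℝ) :
    IsClosed {y : Fin n → ℝ |
      ∃ t ∈ doublyStochastic ℝ (Fin n), IsConsecutive t ∧ y ᵥ* t = y ᵥ* z} := by
  have := isCompact_iff_compactSpace.1 (isCompact_doublyStochastic (m := Fin n))
  have hval : Continuous fun p : (Fin n → ℝ) × doublyStochastic ℝ (Fin n) =>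
      (p.2 : Matrix (Fin n) (Fin n) ℝ) :=
    continuous_snd.subtype_val
  have hC : IsClosed {p : (Fin n → ℝ) × doublyStochastic ℝ (Fin n) |
      IsConsecutive (p.2 : Matrix (Fin n) (Fin n) ℝ) ∧
        p.1 ᵥ* (p.2 : Matrix (Fin n) (Fin n) ℝ) = p.1 ᵥ* z} :=
    (isClosed_setOf_isConsecutive.preimage hval).inter <|
      isClosed_eq (continuous_fst.matrix_vecMul hval)
        (continuous_fst.matrix_vecMul continuous_const)
  convert isClosedMap_fst_of_compactSpace _ hC using 1
  ext y
  simp [and_left_comm]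

lemma Antitone.mem_closure_setOf_strictAnti {x : Fin n → ℝ} (hx : Antitone x) :
    x ∈ closure {y : Fin n → ℝ | StrictAnti y} := by
  have hlim : Tendsto (fun ε : ℝ => x - ε • fun i : Fin n => (i : ℝ)) (𝓝[>] 0) (𝓝 x) := by
    have := tendsto_const_nhds (x := x) |>.sub ((tendsto_id (x := 𝓝 (0 : ℝ))).smul_const
      fun i : Fin n => (i : ℝ))
    simpa using this.mono_left nhdsWithin_le_nhds
  refine mem_closure_of_tendsto hlim (eventually_nhdsWithin_of_forall fun ε hε a b hab => ?_)
  have hab' : (a : ℝ) < b := by exact_mod_cast hab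
  have hxab := hx hab.le
  simp only [Pi.sub_apply, Pi.smul_apply, smul_eq_mul]
  nlinarith [Set.mem_Ioi.1 hε]

lemma exists_isConsecutive_of_antitone {x : Fin n → ℝ} (hx : Antitone x)
    {z : Matrix (Fin n) (Fin n) ℝ} (hz : z ∈ doublyStochastic ℝ (Fin n)) :
    ∃ t ∈ doublyStochastic ℝ (Fin n), IsConsecutive t ∧ x ᵥ* t = x ᵥ* z :=
  closure_minimal (fun _ hy => exists_isConsecutive_of_strictAnti hy hz)
    (isClosed_setOf_exists_isConsecutive z) hx.mem_closure_setOf_strictAnti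

/-- **Transformation to a doubly stochastic matrix with the consecutiveness property.**
For `x_1 ≥ … ≥ x_n` and any doubly stochastic matrix `Z`, there is a doubly
stochastic matrix `T` with the consecutiveness property (for every column `j`,
whenever `t_{i₁j} > 0` and `t_{i₃j} > 0` with `i₁ < i₂ < i₃`, row `i₂` is
finished at column `j`) such that `Σ_i t_{ij} x_i = Σ_i z_{ij} x_i` for all `j`. -/
theorem exists_consecutive_doubly_stochastic
    (n : ℕ) (x : Fin n → ℝ) (hx : Antitone x)
    (z : Fin n → Fin n → ℝ)
    (hz01 : ∀ i j, 0 ≤ z i j ∧ z i j ≤ 1)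
    (hzrow : ∀ i, ∑ j, z i j = 1)
    (hzcol : ∀ j, ∑ i, z i j = 1) :
    ∃ t : Fin n → Fin n → ℝ,
      (∀ i j, 0 ≤ t i j ∧ t i j ≤ 1) ∧
      (∀ i, ∑ j, t i j = 1) ∧
      (∀ j, ∑ i, t i j = 1) ∧
      (∀ j i1 i2 i3 : Fin n, i1 < i2 → i2 < i3 → 0 < t i1 j → 0 < t i3 j →
        ∑ j' ∈ Finset.univ.filter (· ≤ j), t i2 j' = 1) ∧
      (∀ j, ∑ i, t i j * x i = ∑ i, z i j * x i) := by
  have hz : z ∈ doublyStochastic ℝ (Fin n) :=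
    mem_doublyStochastic_iff_sum.2 ⟨fun i j => (hz01 i j).1, hzrow, hzcol⟩
  obtain ⟨t, ht, hcons, htx⟩ := exists_isConsecutive_of_antitone hx hz
  refine ⟨t, fun i j => ⟨nonneg_of_mem_doublyStochastic ht, le_one_of_mem_doublyStochastic ht⟩,
    sum_row_of_mem_doublyStochastic ht, sum_col_of_mem_doublyStochastic ht, hcons, fun j => ?_⟩
  simpa only [vecMul, dotProduct, mul_comm] using congrFun htx j
end

section
/- Let x_1 ≥ x_2 ≥ … ≥ x_n be nonnegative reals and let T = (t_{ij}) be an n×n doubly stochastic matrix with the consecutiveness property. Set t_j = Σ_{i=1}^n t_{ij}·x_i for each j. Then there exists a permutation π of {1,…,n} such that for every k ∈ {1,…,n}: 0 ≤ Σ_{j=1}^{k} (x_{π(j)} − t_j) ≤ x_1 − x_n. -/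
/-!
Let `B(a, k)` be the mass of `t` in its top-left `a × k` block. It equals `k` when `a = n` and
`a` when `k = n`, and it grows by at most one per column, so `⌈B(a, ·)⌉` jumps by `0` or `1` at
each column. Consecutiveness makes "column `k` jumps for the top `a` rows" monotone in `a`: if row
`a` is unfinished at column `k` and an earlier row meets column `k`, no later row does, so the rows
up to `a` exhaust column `k`. Let `π(k)` be the row from which on column `k` jumps. Then the number
of `j < K` with `π(j) < a` is `⌈B(a, K)⌉`; for `K = n` this forces `π` to be a permutation, and
the prefix error over the first `K` columns becomes `Σᵢ eᵢ xᵢ` whose partial sums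
`⌈B(a, K)⌉ - B(a, K)` lie in `[0, 1)` and whose total is `0`. Summation by parts against the
antitone `x` places it in `[0, x₁ - xₙ]`.
-/

open Finset

namespace ConsecutiveRounding

variable {n : ℕ}

def initSeg (n m : ℕ) : Finset (Fin n) := {i | (i : ℕ) < m}

@[simp] lemma mem_initSeg {m : ℕ} {i : Fin n} : i ∈ initSeg n m ↔ (i : ℕ) < m := by
  simp [initSeg]

lemma initSeg_zero : initSeg n 0 = ∅ := by ext; simp

lemma initSeg_of_le {m : ℕ} (h : n ≤ m) : initSeg n m = univ := by
  ext i; simp only [mem_initSeg, mem_univ, iff_true]; omega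

lemma initSeg_succ {m : ℕ} (h : m < n) : initSeg n (m + 1) = insert ⟨m, h⟩ (initSeg n m) := by
  ext i; simp only [mem_initSeg, mem_insert, Fin.ext_iff]; omega

lemma sum_initSeg_succ {M : Type*} [AddCommMonoid M] (f : Fin n → M) {m : ℕ} (h : m < n) :
    ∑ i ∈ initSeg n (m + 1), f i = ∑ i ∈ initSeg n m, f i + f ⟨m, h⟩ := by
  rw [initSeg_succ h, sum_insert (by simp), add_comm]

lemma initSeg_succ_of_le {m : ℕ} (h : n ≤ m) : initSeg n (m + 1) = initSeg n m := by
  rw [initSeg_of_le h, initSeg_of_le (by omega)]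

lemma filter_le_eq_initSeg (k : Fin n) : univ.filter (· ≤ k) = initSeg n (k + 1) := by
  ext i; simp only [mem_filter, mem_univ, true_and, mem_initSeg, Fin.le_def]; omega

lemma card_initSeg {m : ℕ} (h : m ≤ n) : #(initSeg n m) = m := by
  induction m with
  | zero => simp [initSeg_zero]
  | succ m ih => rw [initSeg_succ (by omega), card_insert_of_notMem (by simp), ih (by omega)]

section Abel

variable {x e : Fin n → ℝ}

lemma sum_initSeg_mul_bounds (hx : Antitone x)
    (he : ∀ a, 0 ≤ ∑ i ∈ initSeg n a, e i ∧ ∑ i ∈ initSeg n a, e i ≤ 1) (a : ℕ) (ha : a < n) :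
    (∑ i ∈ initSeg n (a + 1), e i) * x ⟨a, ha⟩ ≤ ∑ i ∈ initSeg n (a + 1), e i * x i ∧
      ∑ i ∈ initSeg n (a + 1), e i * x i ≤
        (∑ i ∈ initSeg n (a + 1), e i) * x ⟨a, ha⟩ + (x ⟨0, Nat.zero_lt_of_lt ha⟩ - x ⟨a, ha⟩) := by
  induction a with
  | zero => simp [sum_initSeg_succ _ ha, initSeg_zero]
  | succ a ih =>
    obtain ⟨lo, hi⟩ := ih (by omega)
    have hgap : 0 ≤ x ⟨a, by omega⟩ - x ⟨a + 1, ha⟩ := sub_nonneg.2 (hx (Fin.mk_le_mk.2 (by omega)))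
    obtain ⟨he0, he1⟩ := he (a + 1)
    rw [sum_initSeg_succ _ ha, sum_initSeg_succ _ ha]
    constructor <;> nlinarith [mul_nonneg he0 hgap, mul_nonneg (sub_nonneg.2 he1) hgap]

theorem sum_mul_mem_Icc_of_antitone (hn : 0 < n) (hx : Antitone x)
    (he : ∀ a, 0 ≤ ∑ i ∈ initSeg n a, e i ∧ ∑ i ∈ initSeg n a, e i ≤ 1) (he0 : ∑ i, e i = 0) :
    0 ≤ ∑ i, e i * x i ∧ ∑ i, e i * x i ≤ x ⟨0, hn⟩ - x ⟨n - 1, Nat.sub_lt hn one_pos⟩ := by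
  have h := sum_initSeg_mul_bounds hx he (n - 1) (by omega)
  rwa [Nat.sub_add_cancel hn, initSeg_of_le le_rfl, he0, zero_mul, zero_add] at h

end Abel

section BlockSum

variable {t : Fin n → Fin n → ℝ}

noncomputable def blockSum (t : Fin n → Fin n → ℝ) (a k : ℕ) : ℝ :=
  ∑ i ∈ initSeg n a, ∑ j ∈ initSeg n k, t i j

lemma blockSum_zero_right (a : ℕ) : blockSum t a 0 = 0 := by simp [blockSum, initSeg_zero]

lemma blockSum_succ_right {k : ℕ} (a : ℕ) (hk : k < n) :
    blockSum t a (k + 1) = blockSum t a k + ∑ i ∈ initSeg n a, t i ⟨k, hk⟩ := by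
  simp only [blockSum, sum_initSeg_succ _ hk, sum_add_distrib]

lemma blockSum_succ_right_of_le {k : ℕ} (a : ℕ) (hk : n ≤ k) :
    blockSum t a (k + 1) = blockSum t a k := by
  simp only [blockSum, initSeg_succ_of_le hk]

lemma blockSum_succ_left {a : ℕ} (k : ℕ) (ha : a < n) :
    blockSum t (a + 1) k = blockSum t a k + ∑ j ∈ initSeg n k, t ⟨a, ha⟩ j :=
  sum_initSeg_succ _ ha

lemma blockSum_succ_left_of_le {a : ℕ} (k : ℕ) (ha : n ≤ a) :
    blockSum t (a + 1) k = blockSum t a k := by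
  simp only [blockSum, initSeg_succ_of_le ha]

lemma blockSum_all_rows (htcol : ∀ j, ∑ i, t i j = 1) {k : ℕ} (hk : k ≤ n) :
    blockSum t n k = k := by
  rw [blockSum, initSeg_of_le le_rfl, sum_comm]
  simp [htcol, card_initSeg hk]

lemma blockSum_all_cols (htrow : ∀ i, ∑ j, t i j = 1) {a : ℕ} (ha : a ≤ n) :
    blockSum t a n = a := by
  simp [blockSum, initSeg_of_le le_rfl, htrow, card_initSeg ha]

lemma blockSum_le_succ_right (ht0 : ∀ i j, 0 ≤ t i j) (a k : ℕ) :
    blockSum t a k ≤ blockSum t a (k + 1) := by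
  rcases lt_or_ge k n with hk | hk
  · rw [blockSum_succ_right a hk]
    exact le_add_of_nonneg_right (sum_nonneg fun i _ => ht0 i _)
  · rw [blockSum_succ_right_of_le a hk]

lemma blockSum_succ_right_le (ht0 : ∀ i j, 0 ≤ t i j) (htcol : ∀ j, ∑ i, t i j = 1) (a k : ℕ) :
    blockSum t a (k + 1) ≤ blockSum t a k + 1 := by
  rcases lt_or_ge k n with hk | hk
  · rw [blockSum_succ_right a hk, ← htcol ⟨k, hk⟩]
    gcongr
    exacts [fun i _ _ => ht0 i _, subset_univ _]
  · rw [blockSum_succ_right_of_le a hk]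
    linarith

end BlockSum

def Consecutive (t : Fin n → Fin n → ℝ) : Prop :=
  ∀ j i1 i2 i3 : Fin n, i1 < i2 → i2 < i3 → 0 < t i1 j → 0 < t i3 j →
    ∑ j' ∈ univ.filter (· ≤ j), t i2 j' = 1

section CeilJumps

variable {t : Fin n → Fin n → ℝ}

def CeilJumps (t : Fin n → Fin n → ℝ) (a k : ℕ) : Prop :=
  ⌈blockSum t a k⌉ < ⌈blockSum t a (k + 1)⌉

lemma ceil_blockSum_succ_right (ht0 : ∀ i j, 0 ≤ t i j) (htcol : ∀ j, ∑ i, t i j = 1)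
    (a k : ℕ) [Decidable (CeilJumps t a k)] :
    ⌈blockSum t a (k + 1)⌉ = ⌈blockSum t a k⌉ + if CeilJumps t a k then 1 else 0 := by
  have lo := Int.ceil_le_ceil (blockSum_le_succ_right ht0 a k)
  have hi := Int.ceil_le_ceil (blockSum_succ_right_le ht0 htcol a k)
  rw [Int.ceil_add_one] at hi
  unfold CeilJumps
  split_ifs <;> omega

lemma not_ceilJumps_zero (k : ℕ) : ¬ CeilJumps t 0 k := by
  simp [CeilJumps, blockSum, initSeg_zero]

lemma ceilJumps_all_rows (htcol : ∀ j, ∑ i, t i j = 1) {k : ℕ} (hk : k < n) :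
    CeilJumps t n k := by
  rw [CeilJumps, blockSum_all_rows htcol hk.le, blockSum_all_rows htcol hk]
  push_cast
  simp only [Int.ceil_natCast, Int.ceil_add_one]
  omega

lemma CeilJumps.succ_left (ht0 : ∀ i j, 0 ≤ t i j) (htcol : ∀ j, ∑ i, t i j = 1)
    (hcons : Consecutive t) {a k : ℕ} (h : CeilJumps t a k) : CeilJumps t (a + 1) k := by
  rcases le_or_gt n a with ha | ha
  · simpa only [CeilJumps, blockSum_succ_left_of_le _ ha] using h
  have hk : k < n := by
    by_contra! hk
    simp [CeilJumps, blockSum_succ_right_of_le a hk] at h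
  obtain ⟨u, hua, hu⟩ : ∃ u : Fin n, (u : ℕ) < a ∧ 0 < t u ⟨k, hk⟩ := by
    by_contra! hnone
    have hzero : ∑ i ∈ initSeg n a, t i ⟨k, hk⟩ = 0 :=
      sum_eq_zero fun i hi => le_antisymm (hnone i (mem_initSeg.1 hi)) (ht0 _ _)
    simp [CeilJumps, blockSum_succ_right a hk, hzero] at h
  unfold CeilJumps at h ⊢
  by_cases hfin : ∑ j ∈ initSeg n (k + 1), t ⟨a, ha⟩ j = 1
  · have hrow : ∑ j ∈ initSeg n k, t ⟨a, ha⟩ j ≤ 1 := by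
      rw [← hfin, sum_initSeg_succ _ hk]
      exact le_add_of_nonneg_right (ht0 _ _)
    calc ⌈blockSum t (a + 1) k⌉ ≤ ⌈blockSum t a k + 1⌉ := by
          rw [blockSum_succ_left k ha]; gcongr
      _ ≤ ⌈blockSum t a (k + 1)⌉ := by rw [Int.ceil_add_one]; omega
      _ < ⌈blockSum t (a + 1) (k + 1)⌉ := by
          rw [blockSum_succ_left _ ha, hfin, Int.ceil_add_one]; omega
  · -- by consecutiveness, column `k` vanishes below the unfinished row `a`
    have hcol : ∑ i ∈ initSeg n (a + 1), t i ⟨k, hk⟩ = 1 := by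
      rw [← htcol ⟨k, hk⟩]
      refine sum_subset (subset_univ _) fun w _ hw => ?_
      rw [mem_initSeg, not_lt] at hw
      refine le_antisymm (not_lt.1 fun hwk => hfin ?_) (ht0 _ _)
      have := hcons ⟨k, hk⟩ u ⟨a, ha⟩ w (Fin.mk_lt_mk.2 hua) (Fin.mk_lt_mk.2 (by omega)) hu hwk
      rwa [filter_le_eq_initSeg] at this
    rw [blockSum_succ_right _ hk, hcol, Int.ceil_add_one]
    omega

end CeilJumps

lemma exists_lt_iff_of_succ {P : ℕ → Prop} (hP : ∀ a, P a → P (a + 1)) (h0 : ¬ P 0) {m : ℕ}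
    (hm : P m) : ∃ i < m, ∀ a, i < a ↔ P a := by
  classical
  have hmono : Monotone P := monotone_nat_of_le_succ hP
  have hpos : 0 < Nat.find ⟨m, hm⟩ :=
    Nat.pos_of_ne_zero fun h => h0 (h ▸ Nat.find_spec ⟨m, hm⟩)
  refine ⟨Nat.find ⟨m, hm⟩ - 1, by have := Nat.find_min' ⟨m, hm⟩ hm; omega, fun a => ?_⟩
  rw [show Nat.find ⟨m, hm⟩ - 1 < a ↔ Nat.find ⟨m, hm⟩ ≤ a by omega, Nat.find_le_iff]
  exact ⟨fun ⟨m, hm, hPm⟩ => hmono hm hPm, fun h => ⟨a, le_rfl, h⟩⟩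

lemma bijective_of_card_filter_lt {σ : Fin n → Fin n}
    (h : ∀ a ≤ n, #{k | (σ k : ℕ) < a} = a) : Function.Bijective σ := by
  refine Finite.surjective_iff_bijective.1 fun v => ?_
  obtain ⟨k, hk, hk'⟩ := exists_mem_notMem_of_card_lt_card
    (s := {k | (σ k : ℕ) < v}) (t := {k | (σ k : ℕ) < v + 1})
    (by rw [h _ v.isLt.le, h _ v.isLt]; omega)
  simp only [mem_filter, mem_univ, true_and, not_lt] at hk hk'
  exact ⟨k, Fin.ext (by omega)⟩

section Rounding

variable {t : Fin n → Fin n → ℝ}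

lemma card_filter_initSeg_eq_ceil (ht0 : ∀ i j, 0 ≤ t i j) (htcol : ∀ j, ∑ i, t i j = 1)
    {σ : Fin n → Fin n} (hσ : ∀ k : Fin n, ∀ a, (σ k : ℕ) < a ↔ CeilJumps t a k) (a K : ℕ) :
    (#{k ∈ initSeg n K | (σ k : ℕ) < a} : ℤ) = ⌈blockSum t a K⌉ := by
  classical
  induction K with
  | zero => simp [initSeg_zero, blockSum_zero_right]
  | succ K ih =>
    rcases lt_or_ge K n with hK | hK
    · rw [initSeg_succ hK, filter_insert, ceil_blockSum_succ_right ht0 htcol, ← ih,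
        ← hσ ⟨K, hK⟩ a]
      split_ifs with hjump
      · rw [card_insert_of_notMem (by simp)]
        push_cast
        rfl
      · simp
    · rw [initSeg_succ_of_le hK, blockSum_succ_right_of_le a hK, ih]

theorem exists_perm_card_filter_eq_ceil (ht0 : ∀ i j, 0 ≤ t i j)
    (htrow : ∀ i, ∑ j, t i j = 1) (htcol : ∀ j, ∑ i, t i j = 1) (hcons : Consecutive t) :
    ∃ σ : Equiv.Perm (Fin n), ∀ a K,
      (#{k ∈ initSeg n K | (σ k : ℕ) < a} : ℤ) = ⌈blockSum t a K⌉ := by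
  have hjump (k : Fin n) : ∃ i : Fin n, ∀ a, (i : ℕ) < a ↔ CeilJumps t a k := by
    obtain ⟨i, hi, h⟩ := exists_lt_iff_of_succ (P := fun a => CeilJumps t a k)
      (fun a => CeilJumps.succ_left ht0 htcol hcons)
      (not_ceilJumps_zero k) (ceilJumps_all_rows htcol k.isLt)
    exact ⟨⟨i, hi⟩, h⟩
  choose σ hσ using hjump
  have hcard := card_filter_initSeg_eq_ceil ht0 htcol hσ
  have hbij : Function.Bijective σ := bijective_of_card_filter_lt fun a ha => by
    have := hcard a n
    rwa [initSeg_of_le le_rfl, blockSum_all_cols htrow ha, Int.ceil_natCast, Nat.cast_inj] at this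
  exact ⟨Equiv.ofBijective σ hbij, hcard⟩

lemma sum_prefix_error_eq (σ : Fin n → Fin n) (x : Fin n → ℝ) (S : Finset (Fin n)) :
    ∑ j ∈ S, (x (σ j) - ∑ i, t i j * x i) =
      ∑ i, (∑ j ∈ S, ((if σ j = i then 1 else 0) - t i j)) * x i := by
  simp only [sum_mul, sub_mul, sum_sub_distrib, ite_mul, one_mul, zero_mul]
  simp_rw [sum_comm (s := univ) (t := S)]
  simp

lemma sum_initSeg_prefix_error (σ : Fin n → Fin n) (a K : ℕ) :
    ∑ i ∈ initSeg n a, ∑ j ∈ initSeg n K, ((if σ j = i then (1 : ℝ) else 0) - t i j) =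
      #{k ∈ initSeg n K | (σ k : ℕ) < a} - blockSum t a K := by
  simp only [blockSum, sum_sub_distrib]
  congr 1
  rw [sum_comm]
  simp [sum_boole]

end Rounding

end ConsecutiveRounding

open ConsecutiveRounding

/-- **Rounding a doubly stochastic matrix with the consecutiveness property.**
For nonnegative `x_1 ≥ … ≥ x_n` and a doubly stochastic `T` with the
consecutiveness property, with `t_j = Σ_i t_{ij} x_i`, there is a permutation
`π` such that every prefix error `Σ_{j≤k} (x_{π(j)} − t_j)` lies in `[0, x_1 − x_n]`. -/
theorem rounding_prefix_error
    (n : ℕ) (hn : 0 < n) (x : Fin n → ℝ) (hx : Antitone x)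
    (t : Fin n → Fin n → ℝ)
    (ht01 : ∀ i j, 0 ≤ t i j ∧ t i j ≤ 1)
    (htrow : ∀ i, ∑ j, t i j = 1)
    (htcol : ∀ j, ∑ i, t i j = 1)
    (hcons : ∀ j i1 i2 i3 : Fin n, i1 < i2 → i2 < i3 → 0 < t i1 j → 0 < t i3 j →
      ∑ j' ∈ Finset.univ.filter (· ≤ j), t i2 j' = 1) :
    ∃ π : Equiv.Perm (Fin n),
      ∀ k : Fin n,
        0 ≤ ∑ j ∈ Finset.univ.filter (· ≤ k), (x (π j) - ∑ i, t i j * x i) ∧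
        ∑ j ∈ Finset.univ.filter (· ≤ k), (x (π j) - ∑ i, t i j * x i)
          ≤ x ⟨0, hn⟩ - x ⟨n - 1, by omega⟩ := by
  have ht0 : ∀ i j, 0 ≤ t i j := fun i j => (ht01 i j).1
  obtain ⟨σ, hσ⟩ := exists_perm_card_filter_eq_ceil ht0 htrow htcol hcons
  have hpartial (K a : ℕ) :
      ∑ i ∈ initSeg n a, ∑ j ∈ initSeg n K, ((if σ j = i then (1 : ℝ) else 0) - t i j) =
        ⌈blockSum t a K⌉ - blockSum t a K := by
    rw [sum_initSeg_prefix_error, ← hσ]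
    norm_cast
  refine ⟨σ, fun k => ?_⟩
  rw [filter_le_eq_initSeg, sum_prefix_error_eq]
  refine sum_mul_mem_Icc_of_antitone hn hx (fun a => ?_) ?_
  · rw [hpartial]
    exact ⟨sub_nonneg.2 (Int.le_ceil _), by linarith [Int.ceil_lt_add_one (blockSum t a (k + 1))]⟩
  · have htotal := hpartial (k + 1) n
    rwa [initSeg_of_le le_rfl, blockSum_all_rows htcol k.isLt, Int.ceil_natCast,
      Int.cast_natCast, sub_self] at htotal
end

section
/- Let p ≥ 3 be an integer and consider the instance with x-values consisting of p copies of p−1, one copy of 2, and p(p−1) copies of 1, and y-values consisting of p−1 copies of p and p(p−1)+2 copies of 1 (both multisets have p²+1 elements and equal sums). Then: (a) every feasible alternating ordering of this instance has value at least 2p−3; (b) for the (non-alternating) stock size problem on the same multiset of numbers, there exists an ordering of all the values (x-values counted positively, y-values counted negatively) in which every prefix sum is nonnegative and every prefix sum is at most p. Hence the ratio between the two optimal values approaches 2 as p grows. -/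
/-!
For (a) put `B = p - 1` and suppose that every peak of a feasible alternating ordering stays
below `2B - 1 = 2p - 3`. Then a step whose x-value is `B` starts with stock below `B - 1`, and if
its y-value is `1` it lifts the stock to at least `B - 1`; steps with y-value `1` never lower the
stock. Hence, at every time, the number of x-values `B` used so far exceeds the number of
y-values `≠ 1` used so far by at most one, and by none while the stock is below `B - 1`. The final
stock is `0 < B - 1`, yet there are at least `p` x-values `B` and only `p - 1` y-values `≠ 1`.

For (b) the values are ordered as `(p - 1, 1, -p)` repeated `p - 1` times, then `p - 1` followed
by `p - 1` copies of `-1`, then `2, -1, -1`, and finally `(1, -1)` repeated `(p - 1)²` times; all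
its prefix sums lie in `[0, p]`. Since only the multiset of values matters, a permutation of the
indices realises this ordering.
-/

section

open Finset

theorem Fin.univ_val_map_val {α : Type*} {n : ℕ} (f : ℕ → α) :
    univ.val.map (fun i : Fin n => f i) = (Multiset.range n).map f := by
  rw [← Finset.range_val, ← Nat.Iio_eq_range, ← Fin.map_valEmbedding_univ, Finset.map_val,
    Multiset.map_map]
  rfl

theorem Fin.sum_filter_le_eq_sum_range {M : Type*} [AddCommMonoid M] {n : ℕ} (f : ℕ → M)
    (t : Fin n) : ∑ i ∈ univ.filter (· ≤ t), f i = ∑ m ∈ range (t + 1), f m := by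
  have : (univ.filter (· ≤ t)).map Fin.valEmbedding = range (t + 1) := by
    ext m
    simp only [mem_map, mem_filter, mem_univ, true_and, Fin.valEmbedding_apply, mem_range]
    exact ⟨fun ⟨i, hi, him⟩ => by omega,
      fun hm => ⟨⟨m, by omega⟩, Fin.mk_le_of_le_val (by omega), rfl⟩⟩
  rw [← this, sum_map]
  rfl

theorem Fin.sum_filter_lt_eq_sum_range {M : Type*} [AddCommMonoid M] {n : ℕ} (f : ℕ → M)
    (t : Fin n) : ∑ i ∈ univ.filter (· < t), f i = ∑ m ∈ range t, f m := by
  have : (univ.filter (· < t)).map Fin.valEmbedding = range t := by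
    ext m
    simp only [mem_map, mem_filter, mem_univ, true_and, Fin.valEmbedding_apply, mem_range]
    exact ⟨fun ⟨i, hi, him⟩ => by omega, fun hm => ⟨⟨m, by omega⟩, Fin.mk_lt_of_lt_val hm, rfl⟩⟩
  rw [← this, sum_map]
  rfl

theorem Nat.count_comp_eq_countP_map {α : Type*} (f : ℕ → α) (P : α → Prop) [DecidablePred P]
    (n : ℕ) : Nat.count (fun m => P (f m)) n = ((Multiset.range n).map f).countP P := by
  rw [Nat.count_eq_card_filter_range, Multiset.countP_map, card_def, filter_val, range_val]

theorem Multiset.map_range_comp_perm {α : Type*} {n : ℕ} (f : ℕ → α) (σ : Equiv.Perm (Fin n))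
    (d : α) :
    (range n).map (fun m => if h : m < n then f (σ ⟨m, h⟩) else d) = (range n).map f := by
  rw [← Fin.univ_val_map_val, ← Fin.univ_val_map_val]
  calc univ.val.map (fun i : Fin n => if h : (i : ℕ) < n then f (σ ⟨i, h⟩) else d)
      = univ.val.map ((fun j : Fin n => f j) ∘ σ) := by
        congr 1; funext i; simp [i.isLt]
    _ = univ.val.map (fun j : Fin n => f j) := by
        rw [← map_map, map_univ_val_equiv]

theorem Multiset.map_range_add_eq_replicate {α : Type*} {f : ℕ → α} {a k : ℕ} {c : α}
    (h : ∀ j < k, f (a + j) = c) : ((range k).map (a + ·)).map f = replicate k c := by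
  rw [map_map, show replicate k c = (range k).map (fun _ => c) by simp]
  exact map_congr rfl fun j hj => h j (mem_range.1 hj)

theorem Multiset.coe_flatten_replicate {α : Type*} (k : ℕ) (l : List α) :
    ((List.replicate k l).flatten : Multiset α) = k • (l : Multiset α) := by
  induction k with
  | zero => simp
  | succ k ih => rw [List.replicate_succ, List.flatten_cons, ← coe_add, ih, succ_nsmul']

theorem exists_perm_apply_eq_of_map_univ_eq {α β : Type*} [Fintype α] {v w : α → β}
    (h : univ.val.map w = univ.val.map v) : ∃ ρ : Equiv.Perm α, ∀ i, v (ρ i) = w i := by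
  classical
  have hfiber (c : β) : Fintype.card {a // w a = c} = Fintype.card {a // v a = c} := by
    simpa [Fintype.card_subtype, Multiset.count_map, eq_comm, card_def] using
      congrArg (Multiset.count c) h
  exact ⟨.ofFiberEquiv fun c => Fintype.equivOfCardEq (hfiber c), Equiv.ofFiberEquiv_map _⟩

theorem exists_perm_sum_filter_le_eq_sum_take {M : Type*} [AddCommMonoid M] {n : ℕ}
    (v : ℕ → M) (L : List M) (hlen : L.length = n) (hv : (Multiset.range n).map v = L) :
    ∃ ρ : Equiv.Perm (Fin n), ∀ t : Fin n,
      ∑ i ∈ univ.filter (· ≤ t), v (ρ i) = (L.take (t + 1)).sum := by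
  subst hlen
  obtain ⟨ρ, hρ⟩ := exists_perm_apply_eq_of_map_univ_eq (v := fun i : Fin L.length => v i)
    (w := fun i => L[(i : ℕ)])
    (by rw [Fin.univ_val_map_val, hv, Fin.univ_val_map, List.ofFn_getElem])
  refine ⟨ρ, fun t => ?_⟩
  have htake := List.sum_take_ofFn (fun i : Fin L.length => L[(i : ℕ)]) (t + 1)
  rw [List.ofFn_getElem] at htake
  simp_rw [show ∀ i, v (ρ i) = L[(i : ℕ)] from hρ, htake, Fin.le_def, Nat.lt_succ_iff]

namespace StockSize

section Alternating

variable (x y : ℕ → ℝ)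

def stock (m : ℕ) : ℝ := ∑ i ∈ range m, (x i - y i)

theorem stock_succ (m : ℕ) : stock x y (m + 1) = stock x y m + x m - y m := by
  rw [stock, sum_range_succ, stock]; ring

theorem count_eq_le_count_ne_add_ite (B : ℝ) {n : ℕ} (hx : ∀ m < n, 1 ≤ x m)
    (hfeas : ∀ m ≤ n, 0 ≤ stock x y m) (hpeak : ∀ m < n, stock x y m + x m < 2 * B - 1) :
    Nat.count (x · = B) n ≤ Nat.count (y · ≠ 1) n + if B - 1 ≤ stock x y n then 1 else 0 := by
  induction n with
  | zero => simp
  | succ n ih =>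
    specialize ih (fun m hm => hx m (by omega)) (fun m hm => hfeas m (by omega))
      (fun m hm => hpeak m (by omega))
    have hstep := stock_succ x y n
    have hstock := hfeas n n.le_succ
    have hx₁ := hx n n.lt_succ_self
    have hpeak₁ := hpeak n n.lt_succ_self
    rw [Nat.count_succ, Nat.count_succ]
    by_cases hxB : x n = B
    · have hlow : stock x y n < B - 1 := by linarith
      rw [if_neg (not_le.2 hlow)] at ih
      by_cases hy : y n = 1
      · have hhigh : B - 1 ≤ stock x y (n + 1) := by linarith
        rw [if_pos hxB, if_neg (not_not.2 hy), if_pos hhigh]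
        omega
      · rw [if_pos hxB, if_pos hy]
        omega
    · rw [if_neg hxB]
      by_cases hy : y n = 1
      · have hmono : stock x y n ≤ stock x y (n + 1) := by linarith
        rw [if_neg (not_not.2 hy)]
        split_ifs at ih ⊢ <;> first | omega | linarith
      · rw [if_pos hy]
        split_ifs at ih ⊢ <;> omega

theorem exists_peak_ge (B : ℝ) {n : ℕ} (hx : ∀ m < n, 1 ≤ x m)
    (hfeas : ∀ m ≤ n, 0 ≤ stock x y m) (hend : stock x y n < B - 1)
    (hcount : Nat.count (y · ≠ 1) n < Nat.count (x · = B) n) :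
    ∃ m < n, 2 * B - 1 ≤ stock x y m + x m := by
  by_contra! hpeak
  have := count_eq_le_count_ne_add_ite x y B hx hfeas hpeak
  rw [if_neg (not_le.2 hend)] at this
  omega

end Alternating

theorem exists_alternating_peak_ge {n : ℕ} (f g : ℕ → ℝ) (σ ν : Equiv.Perm (Fin n)) (B : ℝ)
    (hf : ∀ j < n, 1 ≤ f j)
    (hsum : ((Multiset.range n).map f).sum - ((Multiset.range n).map g).sum < B - 1)
    (hcount :
      ((Multiset.range n).map g).countP (· ≠ 1) < ((Multiset.range n).map f).countP (· = B))
    (hfeas : ∀ t : Fin n, 0 ≤ ∑ i ∈ univ.filter (· ≤ t), (f (σ i) - g (ν i))) :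
    ∃ t : Fin n, 2 * B - 1 ≤
      ∑ i ∈ univ.filter (· ≤ t), f (σ i) - ∑ i ∈ univ.filter (· < t), g (ν i) := by
  set x : ℕ → ℝ := fun m => if h : m < n then f (σ ⟨m, h⟩) else 0
  set y : ℕ → ℝ := fun m => if h : m < n then g (ν ⟨m, h⟩) else 0
  have hx (i : Fin n) : x i = f (σ i) := by simp [x, i.isLt]
  have hy (i : Fin n) : y i = g (ν i) := by simp [y, i.isLt]
  have hxmap : (Multiset.range n).map x = (Multiset.range n).map f :=
    Multiset.map_range_comp_perm f σ 0
  have hymap : (Multiset.range n).map y = (Multiset.range n).map g :=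
    Multiset.map_range_comp_perm g ν 0
  have hx_ge (m : ℕ) (hm : m < n) : 1 ≤ x m := by simpa [x, hm] using hf _ (σ _).isLt
  have hstock_nonneg (m : ℕ) (hm : m ≤ n) : 0 ≤ stock x y m := by
    rcases m with _ | m
    · simp [stock]
    · convert hfeas ⟨m, hm⟩ using 1
      simp_rw [← hx, ← hy]
      exact (Fin.sum_filter_le_eq_sum_range (fun m => x m - y m) ⟨m, hm⟩).symm
  have hstock_end : stock x y n < B - 1 := by
    rwa [stock, sum_sub_distrib, sum_eq_multiset_sum, sum_eq_multiset_sum, range_val, hxmap,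
      hymap]
  have hcount' : Nat.count (y · ≠ 1) n < Nat.count (x · = B) n := by
    rwa [Nat.count_comp_eq_countP_map y (· ≠ 1), Nat.count_comp_eq_countP_map x (· = B), hxmap,
      hymap]
  obtain ⟨m, hm, hge⟩ := exists_peak_ge x y B hx_ge hstock_nonneg hstock_end hcount'
  refine ⟨⟨m, hm⟩, hge.trans_eq ?_⟩
  simp_rw [← hx, ← hy, Fin.sum_filter_le_eq_sum_range x, Fin.sum_filter_lt_eq_sum_range y, stock,
    sum_sub_distrib, sum_range_succ]
  ring

def PrefixSumsIn (lo hi : ℝ) : ℝ → List ℝ → Prop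
  | _, [] => True
  | s, a :: L => s + a ∈ Set.Icc lo hi ∧ PrefixSumsIn lo hi (s + a) L

variable {lo hi : ℝ}

theorem prefixSumsIn_append {s : ℝ} {A B : List ℝ} :
    PrefixSumsIn lo hi s (A ++ B) ↔ PrefixSumsIn lo hi s A ∧ PrefixSumsIn lo hi (s + A.sum) B := by
  induction A generalizing s with
  | nil => simp [PrefixSumsIn]
  | cons a A ih => simp [PrefixSumsIn, ih, add_assoc, and_assoc]

theorem prefixSumsIn_flatten_replicate {s : ℝ} {A : List ℝ} (hA : A.sum = 0)
    (h : PrefixSumsIn lo hi s A) (k : ℕ) : PrefixSumsIn lo hi s (List.replicate k A).flatten := by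
  induction k with
  | zero => simp [PrefixSumsIn]
  | succ k ih =>
    rw [List.replicate_succ, List.flatten_cons, prefixSumsIn_append, hA, add_zero]
    exact ⟨h, ih⟩

theorem prefixSumsIn_replicate {s a : ℝ} {k : ℕ} (ha : a ≤ 0) (hs : s ≤ hi)
    (hend : lo ≤ s + k * a) : PrefixSumsIn lo hi s (List.replicate k a) := by
  induction k generalizing s with
  | zero => simp [PrefixSumsIn]
  | succ k ih =>
    push_cast at hend
    exact ⟨⟨by nlinarith [k.cast_nonneg (α := ℝ)], by linarith⟩, ih (by linarith) (by linarith)⟩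

theorem PrefixSumsIn.sum_take_mem {s : ℝ} {L : List ℝ} (h : PrefixSumsIn lo hi s L) {k : ℕ}
    (hk₀ : 0 < k) (hk : k ≤ L.length) : s + (L.take k).sum ∈ Set.Icc lo hi := by
  induction L generalizing s k with
  | nil => simp at hk; omega
  | cons a L ih =>
    obtain _ | _ | k := k
    · omega
    · simpa using h.1
    · rw [List.take_succ_cons, List.sum_cons, ← add_assoc]
      exact ih h.2 (by omega) (by simpa using hk)

end StockSize

end

theorem Multiset.map_range_two_mul_ite {α : Type*} [Neg α] (X Y : ℕ → α) (N : ℕ) :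
    (range (2 * N)).map (fun j => if j < N then X (j + 1) else -Y (j - N + 1)) =
      (range N).map (fun j => X (j + 1)) + ((range N).map (fun j => Y (j + 1))).map Neg.neg := by
  rw [two_mul, range_add, map_add, map_map, map_map]
  congr 1
  · exact map_congr rfl fun j hj => if_pos (mem_range.1 hj)
  · refine map_congr rfl fun j _ => ?_
    simp

namespace GapInstance

open Multiset

noncomputable def xValues (p : ℕ) : Multiset ℝ :=
  replicate p ((p : ℝ) - 1) + {2} + replicate (p * (p - 1)) 1

noncomputable def yValues (p : ℕ) : Multiset ℝ :=
  replicate (p - 1) (p : ℝ) + replicate (p * (p - 1) + 2) 1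

theorem map_range_X {p : ℕ} (hp : 1 ≤ p) {X : ℕ → ℝ} (hX : ∀ i, 1 ≤ i → i ≤ p ^ 2 + 1 →
      X i = if i ≤ p then (p : ℝ) - 1 else if i = p + 1 then 2 else 1) :
    (range (p ^ 2 + 1)).map (fun j => X (j + 1)) = xValues p := by
  have hp2 : p ^ 2 + 1 = 0 + p + 1 + p * (p - 1) := by
    obtain ⟨q, rfl⟩ := Nat.exists_eq_add_of_le' hp; simp; ring
  rw [hp2, range_add, range_add, range_add, range_zero, zero_add, map_add, map_add, xValues]
  congr 1; congr 1
  all_goals refine map_range_add_eq_replicate fun j hj => ?_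
  all_goals rw [hX _ (by omega) (by rw [hp2]; omega)]
  · rw [if_pos (by omega)]
  · rw [if_neg (by omega), if_pos (by omega)]
  · rw [if_neg (by omega), if_neg (by omega)]

theorem map_range_Y {p : ℕ} (hp : 1 ≤ p) {Y : ℕ → ℝ}
    (hY : ∀ i, 1 ≤ i → i ≤ p ^ 2 + 1 → Y i = if i ≤ p - 1 then (p : ℝ) else 1) :
    (range (p ^ 2 + 1)).map (fun j => Y (j + 1)) = yValues p := by
  have hp2 : p ^ 2 + 1 = 0 + (p - 1) + (p * (p - 1) + 2) := by
    obtain ⟨q, rfl⟩ := Nat.exists_eq_add_of_le' hp; simp; ring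
  rw [hp2, range_add, range_add, range_zero, zero_add, map_add, yValues]
  congr 1
  all_goals refine map_range_add_eq_replicate fun j hj => ?_
  all_goals rw [hY _ (by omega) (by rw [hp2]; omega)]
  · rw [if_pos (by omega)]
  · rw [if_neg (by omega)]

theorem sum_xValues_eq_sum_yValues (p : ℕ) : (xValues p).sum = (yValues p).sum := by
  simp only [xValues, yValues, sum_add, sum_replicate, sum_singleton, nsmul_eq_mul]
  rcases p with _ | q
  · norm_num
  · push_cast; ring

theorem countP_ne_one_yValues {p : ℕ} (hp : 2 ≤ p) : (yValues p).countP (· ≠ 1) = p - 1 := by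
  have : (p : ℝ) ≠ 1 := by norm_cast; omega
  simp [yValues, ← coe_replicate, List.countP_replicate, this]

theorem le_countP_eq_xValues (p : ℕ) : p ≤ (xValues p).countP (· = (p : ℝ) - 1) := by
  rw [xValues, countP_add, countP_add]
  simp [← coe_replicate, List.countP_replicate]
  omega

noncomputable def order (p : ℕ) : List ℝ :=
  (List.replicate (p - 1) [(p : ℝ) - 1, 1, -p]).flatten ++
    (((p : ℝ) - 1) :: List.replicate (p - 1) (-1)) ++ [2, -1, -1] ++
    (List.replicate ((p - 1) ^ 2) [1, -1]).flatten

theorem length_order {p : ℕ} (hp : 1 ≤ p) : (order p).length = 2 * (p ^ 2 + 1) := by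
  obtain ⟨q, rfl⟩ := Nat.exists_eq_add_of_le' hp
  simp [order, List.length_flatten, List.sum_replicate]
  ring

theorem coe_order {p : ℕ} (hp : 1 ≤ p) :
    (order p : Multiset ℝ) = xValues p + (yValues p).map Neg.neg := by
  obtain ⟨q, rfl⟩ := Nat.exists_eq_add_of_le' hp
  simp only [order, xValues, yValues, ← coe_add, ← cons_coe, coe_nil, coe_flatten_replicate,
    coe_replicate, map_add, map_nsmul, map_singleton, add_zero, ← singleton_add,
    ← nsmul_singleton, Nat.add_sub_cancel, show (q + 1) * q = q ^ 2 + q by ring, add_nsmul,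
    one_nsmul, nsmul_add]
  abel

open StockSize in
theorem prefixSumsIn_order {p : ℕ} (hp : 2 ≤ p) : PrefixSumsIn 0 p 0 (order p) := by
  have hp' : (2 : ℝ) ≤ p := by exact_mod_cast hp
  have hcast : ((p - 1 : ℕ) : ℝ) = p - 1 := by push_cast [Nat.cast_sub (by omega : 1 ≤ p)]; ring
  have hsum₁ : (List.replicate (p - 1) [(p : ℝ) - 1, 1, -p]).flatten.sum = 0 := by
    simp [List.sum_flatten, hcast]; ring
  have hsum₂ : (((p : ℝ) - 1) :: List.replicate (p - 1) (-1)).sum = 0 := by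
    simp [hcast]
  simp only [order, prefixSumsIn_append, List.sum_append, hsum₁, hsum₂]
  refine ⟨⟨⟨prefixSumsIn_flatten_replicate (by simp; ring) ?_ _, ?_⟩, ?_⟩,
    prefixSumsIn_flatten_replicate (by simp) ?_ _⟩
  · norm_num [PrefixSumsIn]; linarith
  · exact ⟨⟨by linarith, by linarith⟩,
      prefixSumsIn_replicate (by norm_num) (by linarith) (by rw [hcast]; linarith)⟩
  · norm_num [PrefixSumsIn]; omega
  · norm_num [PrefixSumsIn]; linarith

end GapInstance

/-- **Gap instance between the alternating and ordinary stock size problems.**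
For the instance with x-values `p` copies of `p−1`, one `2`, `p(p−1)` copies of `1`
and y-values `p−1` copies of `p`, `p(p−1)+2` copies of `1` (each multiset has
`N = p²+1` elements):
(a) every feasible alternating ordering attains a prefix value at least `2p−3`;
(b) for the ordinary stock size problem there is an ordering of all `2N` values
(x-values positive, y-values negative) with every prefix sum in `[0, p]`. -/
theorem alternating_vs_stock_size_gap
    (p : ℕ) (hp : 3 ≤ p) (N : ℕ) (hN : N = p ^ 2 + 1)
    (X Y : ℕ → ℝ)
    (hX : ∀ i, 1 ≤ i → i ≤ N →
      X i = if i ≤ p then (p : ℝ) - 1 else if i = p + 1 then 2 else 1)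
    (hY : ∀ i, 1 ≤ i → i ≤ N → Y i = if i ≤ p - 1 then (p : ℝ) else 1) :
    (∀ σ ν : Equiv.Perm (Fin N),
      (∀ t : Fin N, 0 ≤ ∑ i ∈ Finset.univ.filter (· ≤ t),
          (X ((σ i : ℕ) + 1) - Y ((ν i : ℕ) + 1))) →
      ∃ t : Fin N,
        2 * (p : ℝ) - 3 ≤ (∑ i ∈ Finset.univ.filter (· ≤ t), X ((σ i : ℕ) + 1))
          - ∑ i ∈ Finset.univ.filter (· < t), Y ((ν i : ℕ) + 1)) ∧
    (∃ ρ : Equiv.Perm (Fin (2 * N)),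
      ∀ t : Fin (2 * N),
        0 ≤ (∑ i ∈ Finset.univ.filter (· ≤ t),
          (if ((ρ i : ℕ)) < N then X ((ρ i : ℕ) + 1) else -Y ((ρ i : ℕ) - N + 1))) ∧
        (∑ i ∈ Finset.univ.filter (· ≤ t),
          (if ((ρ i : ℕ)) < N then X ((ρ i : ℕ) + 1) else -Y ((ρ i : ℕ) - N + 1)))
          ≤ (p : ℝ)) := by
  subst hN
  have hp' : (3 : ℝ) ≤ p := by exact_mod_cast hp
  have hXs := GapInstance.map_range_X (by omega) hX
  have hYs := GapInstance.map_range_Y (by omega) hY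
  refine ⟨fun σ ν hfeas => ?_, ?_⟩
  · rw [show 2 * (p : ℝ) - 3 = 2 * ((p : ℝ) - 1) - 1 by ring]
    refine StockSize.exists_alternating_peak_ge (fun j => X (j + 1)) (fun j => Y (j + 1)) σ ν _
      (fun j hj => ?_) ?_ ?_ hfeas
    · rw [hX _ (by omega) (by omega)]
      split_ifs <;> linarith
    · rw [hXs, hYs, GapInstance.sum_xValues_eq_sum_yValues]
      linarith
    · rw [hXs, hYs, GapInstance.countP_ne_one_yValues (by omega)]
      exact (Nat.sub_lt (by omega) one_pos).trans_le (GapInstance.le_countP_eq_xValues p)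
  · obtain ⟨ρ, hρ⟩ := exists_perm_sum_filter_le_eq_sum_take
      (fun j => if j < p ^ 2 + 1 then X (j + 1) else -Y (j - (p ^ 2 + 1) + 1)) (GapInstance.order p)
      (GapInstance.length_order (by omega))
      (by rw [Multiset.map_range_two_mul_ite X Y, hXs, hYs, GapInstance.coe_order (by omega)])
    refine ⟨ρ, fun t => ?_⟩
    rw [hρ t]
    simpa using (GapInstance.prefixSumsIn_order (by omega)).sum_take_mem t.val.succ_pos
      (by rw [GapInstance.length_order (by omega)]; omega)
end

section
/- Let n be an even positive integer, let x_i = 1 for all i ∈ {1,…,n}, and let y_i = 2 for i ∈ {1,…,n/2} and y_i = 0 for i ∈ {n/2+1,…,n}. Then for every permutation π of {1,…,n}, the value η(π) of the gasoline problem satisfies η(π) ≥ n/2 (for instance for the cyclic interval [n/2+1, n] the discrepancy equals n/2). Hence on this instance the optimal value is at least n/2 while μ = max(max_i x_i, max_i y_i) = 2, so the ratio between the optimum and μ is unbounded. -/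
/-!
Take the cyclic interval formed by the second half of the positions, from `n/2` to the last
one. Every `x` equals `1`, so whatever `π` is, the `x`-sum over it is its length `n/2`, while
every `y` in the second half is `0`. Its discrepancy is therefore exactly `n/2`.
-/

open Finset

section CyclicInterval

variable {n : ℕ}

def cyclicInterval (k ℓ : Fin n) : Finset (Fin n) :=
  {i | (k ≤ ℓ ∧ k ≤ i ∧ i ≤ ℓ) ∨ (ℓ < k ∧ (k ≤ i ∨ i ≤ ℓ))}

theorem cyclicInterval_eq_Ici_of_forall_le {k ℓ : Fin n} (hℓ : ∀ i, i ≤ ℓ) :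
    cyclicInterval k ℓ = Ici k := by
  ext i
  simp [cyclicInterval, hℓ]

end CyclicInterval

/-- **Unbounded gap between the optimum of the gasoline problem and μ.**
For the instance `x ≡ 1`, `y_i = 2` for the first `n/2` positions and `y_i = 0`
for the rest (`n` even), every permutation `π` has gasoline value `η(π) ≥ n/2`:
any `η` bounding the discrepancy `|Σ_{i∈[k,ℓ]} x_{π(i)} − Σ_{i∈[k,ℓ−1]} y_i|` of
all cyclic intervals `[k,ℓ]` satisfies `η ≥ n/2`.  (A cyclic interval `[k,ℓ]` is
`{i : k ≤ i ≤ ℓ}` if `k ≤ ℓ` and `{i : k ≤ i ∨ i ≤ ℓ}` otherwise, and `[k,ℓ−1]`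
is `[k,ℓ]` with `ℓ` removed.) -/
theorem gasoline_gap_instance
    (n : ℕ) (hn : 0 < n) (heven : Even n)
    (x y : Fin n → ℝ)
    (hx : ∀ i, x i = 1)
    (hy : ∀ i : Fin n, y i = if (i : ℕ) < n / 2 then 2 else 0)
    (π : Equiv.Perm (Fin n)) (η : ℝ)
    (hη : ∀ k ℓ : Fin n,
      |(∑ i ∈ Finset.univ.filter
          (fun i : Fin n => (k ≤ ℓ ∧ k ≤ i ∧ i ≤ ℓ) ∨ (ℓ < k ∧ (k ≤ i ∨ i ≤ ℓ))),
          x (π i))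
        - (∑ i ∈ Finset.univ.filter
          (fun i : Fin n =>
            ((k ≤ ℓ ∧ k ≤ i ∧ i ≤ ℓ) ∨ (ℓ < k ∧ (k ≤ i ∨ i ≤ ℓ))) ∧ i ≠ ℓ),
          y i)| ≤ η) :
    (n : ℝ) / 2 ≤ η := by
  obtain ⟨m, rfl⟩ := heven
  let k : Fin (m + m) := ⟨m, by omega⟩
  let ℓ : Fin (m + m) := ⟨m + m - 1, by omega⟩
  have hℓ : ∀ i, i ≤ ℓ := fun i => Fin.le_def.2 (by simp only [ℓ]; omega)
  have h := hη k ℓ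
  rw [← filter_filter, filter_ne'] at h
  change |∑ i ∈ cyclicInterval k ℓ, x (π i) - ∑ i ∈ (cyclicInterval k ℓ).erase ℓ, y i| ≤ η at h
  rw [cyclicInterval_eq_Ici_of_forall_le hℓ] at h
  have hx_sum : ∑ i ∈ Ici k, x (π i) = m := by
    simp only [hx, sum_const, Fin.card_Ici, k, nsmul_eq_mul, mul_one]
    norm_cast
    omega
  have hy_sum : ∑ i ∈ (Ici k).erase ℓ, y i = 0 := by
    refine sum_eq_zero fun i hi => ?_
    have hki : m ≤ (i : ℕ) := Fin.le_def.1 (mem_Ici.1 (mem_of_mem_erase hi))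
    rw [hy i, if_neg (by omega)]
  rw [hx_sum, hy_sum, sub_zero, abs_of_nonneg (Nat.cast_nonneg m)] at h
  push_cast
  linarith
end
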